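/- arXiv:0904.3110 — 3 statements merged into one kernel-verified Lean document; each statement's English description precedes it below -/
import Mathlib

section
/- Let C ⊆ 𝔽₂ⁿ be a binary linear code all of whose nonzero words have Hamming weight ≥ 4. Then the lattice Λ_C is eutactic: there exist strictly positive real numbers λ_v, indexed by the minimal vectors v ∈ S(Λ_C), with λ_{−v} = λ_v, such that ∑_{v ∈ S(Λ_C)} λ_v · v·vᵀ = Idₙ (the n×n identity matrix). -/
open scoped BigOperators RealInnerProductSpace

noncomputable section

/-- The minimum of a lattice `Λ` in `ℝⁿ`: the infimum of the squared Euclidean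
lengths `N(x) = ⟪x, x⟫` of the nonzero vectors of `Λ`. -/
def latticeMin {n : ℕ} (Λ : Submodule ℤ (EuclideanSpace ℝ (Fin n))) : ℝ :=
  sInf {r : ℝ | ∃ x ∈ Λ, x ≠ 0 ∧ ⟪x, x⟫ = r}

/-- The set of minimal vectors of a lattice `Λ`:
`S(Λ) = {x ∈ Λ : x ≠ 0, N(x) = min Λ}`. -/
def minimalVectors {n : ℕ} (Λ : Submodule ℤ (EuclideanSpace ℝ (Fin n))) :
    Set (EuclideanSpace ℝ (Fin n)) :=
  {x | x ∈ Λ ∧ x ≠ 0 ∧ ⟪x, x⟫ = latticeMin Λ}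

/-- `Λ` is a (full-rank) lattice in `ℝⁿ`: a discrete subgroup that spans `ℝⁿ`. -/
def IsLattice {n : ℕ} (Λ : Submodule ℤ (EuclideanSpace ℝ (Fin n))) : Prop :=
  DiscreteTopology Λ ∧ Submodule.span ℝ (Λ : Set (EuclideanSpace ℝ (Fin n))) = ⊤

/-- `Λ'` is a Minkowskian sublattice of `Λ`: it is generated by `n` linearly
independent minimal vectors of `Λ`. -/
def IsMinkowskian {n : ℕ} (Λ Λ' : Submodule ℤ (EuclideanSpace ℝ (Fin n))) : Prop :=
  ∃ e : Fin n → EuclideanSpace ℝ (Fin n),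
    LinearIndependent ℝ e ∧ (∀ i, e i ∈ minimalVectors Λ) ∧
      Λ' = Submodule.span ℤ (Set.range e)

/-- The quotient group `Λ/Λ'`. -/
abbrev quotLat {n : ℕ} (Λ Λ' : Submodule ℤ (EuclideanSpace ℝ (Fin n))) : Type :=
  Λ ⧸ (Submodule.comap Λ.subtype Λ')

/-- The index `[Λ : Λ']`. -/
def subIndex {n : ℕ} (Λ Λ' : Submodule ℤ (EuclideanSpace ℝ (Fin n))) : ℕ :=
  Nat.card (quotLat Λ Λ')

/-- The coordinatewise 0–1 lift of a binary codeword to `ℝⁿ`. -/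
def codeLift {n : ℕ} (w : Fin n → ZMod 2) : EuclideanSpace ℝ (Fin n) :=
  WithLp.toLp 2 (fun i => ((w i).val : ℝ))

/-- The lattice `Λ_C` associated with a binary linear code `C ⊆ 𝔽₂ⁿ`: it is
generated by `ℤⁿ` together with the vectors `x_w/2` for `w ∈ C`. -/
def codeLattice {n : ℕ} (C : Submodule (ZMod 2) (Fin n → ZMod 2)) :
    Submodule ℤ (EuclideanSpace ℝ (Fin n)) :=
  Submodule.span ℤ
    ((Set.range fun i : Fin n => EuclideanSpace.single i (1 : ℝ)) ∪
      ((fun w => (2 : ℝ)⁻¹ • codeLift w) '' (C : Set (Fin n → ZMod 2))))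
namespace CodeEutaxyAux

open Finset

variable {n : ℕ}

lemma zmod2_cases : ∀ a : ZMod 2, a = 0 ∨ a = 1 := by decide

lemma val_of_ne {a : ZMod 2} (h : a ≠ 0) : (a.val : ℝ) = 1 := by
  rcases zmod2_cases a with h0 | h1
  · exact absurd h0 h
  · subst h1; norm_num [ZMod.val_one]

lemma eval_sum {ι : Type*} (s : Finset ι) (f : ι → EuclideanSpace ℝ (Fin n)) (j : Fin n) :
    (∑ i ∈ s, f i) j = ∑ i ∈ s, f i j := by
  induction s using Finset.cons_induction with
  | empty => rfl
  | cons a s ha ih => rw [Finset.sum_cons, Finset.sum_cons, ← ih]; rfl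

lemma eval_zsmul (c : ℤ) (v : EuclideanSpace ℝ (Fin n)) (j : Fin n) :
    (c • v) j = (c : ℝ) * v j := by
  rw [← Int.cast_smul_eq_zsmul ℝ]; rfl

lemma eval_neg (v : EuclideanSpace ℝ (Fin n)) (j : Fin n) : (-v) j = -(v j) := rfl

lemma inner_self_eq (x : EuclideanSpace ℝ (Fin n)) : ⟪x, x⟫ = ∑ i, x i * x i := by
  rw [PiLp.inner_apply]; simp [RCLike.inner_apply, conj_trivial, sq]

lemma half_val_add : ∀ a b : ZMod 2,
    ∃ m : ℤ, ((a + b).val : ℝ) / 2 = (a.val : ℝ) / 2 + (b.val : ℝ) / 2 + (m : ℝ) := by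
  intro a b
  rcases zmod2_cases a with ha | ha <;> rcases zmod2_cases b with hb | hb <;>
    subst ha <;> subst hb
  · exact ⟨0, by rw [show (0 + 0 : ZMod 2).val = 0 from by decide,
      show (0 : ZMod 2).val = 0 from by decide]; norm_num⟩
  · exact ⟨0, by rw [show (0 + 1 : ZMod 2).val = 1 from by decide,
      show (0 : ZMod 2).val = 0 from by decide, show (1 : ZMod 2).val = 1 from by decide]; norm_num⟩
  · exact ⟨0, by rw [show (1 + 0 : ZMod 2).val = 1 from by decide,
      show (0 : ZMod 2).val = 0 from by decide, show (1 : ZMod 2).val = 1 from by decide]; norm_num⟩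
  · exact ⟨-1, by rw [show (1 + 1 : ZMod 2).val = 0 from by decide,
      show (1 : ZMod 2).val = 1 from by decide]; norm_num⟩

/-- The union of the cosets `x_w/2 + ℤⁿ`, as an additive subgroup. -/
def coset (C : Submodule (ZMod 2) (Fin n → ZMod 2)) :
    AddSubgroup (EuclideanSpace ℝ (Fin n)) where
  carrier := {x | ∃ w ∈ C, ∀ i, ∃ k : ℤ, x i = ((w i).val : ℝ) / 2 + (k : ℝ)}
  zero_mem' := ⟨0, C.zero_mem, fun i =>
    ⟨0, by
      show (0:ℝ) = (((0 : Fin n → ZMod 2) i).val : ℝ) / 2 + ((0:ℤ) : ℝ)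
      norm_num [show ((0 : Fin n → ZMod 2) i) = 0 from rfl]⟩⟩
  add_mem' := by
    rintro x y ⟨w, hw, hx⟩ ⟨w', hw', hy⟩
    refine ⟨w + w', C.add_mem hw hw', fun i => ?_⟩
    obtain ⟨k, hk⟩ := hx i
    obtain ⟨k', hk'⟩ := hy i
    obtain ⟨m, hm⟩ := half_val_add (w i) (w' i)
    refine ⟨k + k' - m, ?_⟩
    have h1 : (x + y) i = x i + y i := rfl
    have h2 : ((w + w') i) = w i + w' i := rfl
    rw [h1, hk, hk', h2, hm]
    push_cast
    ring
  neg_mem' := by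
    rintro x ⟨w, hw, hx⟩
    refine ⟨w, hw, fun i => ?_⟩
    obtain ⟨k, hk⟩ := hx i
    refine ⟨-((w i).val : ℤ) - k, ?_⟩
    rw [eval_neg, hk]
    push_cast
    ring

theorem mem_codeLattice (C : Submodule (ZMod 2) (Fin n → ZMod 2))
    (x : EuclideanSpace ℝ (Fin n)) :
    x ∈ codeLattice C ↔ ∃ w ∈ C, ∀ i, ∃ k : ℤ, x i = ((w i).val : ℝ) / 2 + (k : ℝ) := by
  constructor
  · intro hx
    have hle : codeLattice C ≤ AddSubgroup.toIntSubmodule (coset C) := by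
      rw [codeLattice, Submodule.span_le]
      rintro y hy
      rcases hy with ⟨i, rfl⟩ | ⟨w, hw, rfl⟩
      · refine ⟨0, C.zero_mem, fun j => ⟨if j = i then 1 else 0, ?_⟩⟩
        show EuclideanSpace.single i (1:ℝ) j = (((0 : Fin n → ZMod 2) j).val : ℝ) / 2 + _
        rw [EuclideanSpace.single_apply, show ((0 : Fin n → ZMod 2) j) = 0 from rfl]
        split <;> simp
      · refine ⟨w, hw, fun j => ⟨0, ?_⟩⟩
        simp only [PiLp.smul_apply, codeLift, smul_eq_mul]
        push_cast
        ring
    exact hle hx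
  · rintro ⟨w, hw, hx⟩
    choose k hk using hx
    have hxeq : x = (2:ℝ)⁻¹ • codeLift w + ∑ i, k i • EuclideanSpace.single i (1:ℝ) := by
      ext j
      have h1 : ((2:ℝ)⁻¹ • codeLift w + ∑ i, k i • EuclideanSpace.single i (1:ℝ)) j
          = (2:ℝ)⁻¹ * ((w j).val : ℝ)
            + ∑ i, (k i : ℝ) * (EuclideanSpace.single i (1:ℝ)) j := by
        rw [PiLp.add_apply, PiLp.smul_apply]
        simp only [codeLift, smul_eq_mul]
        rw [eval_sum]
        congr 1
        exact Finset.sum_congr rfl fun i _ => eval_zsmul _ _ _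
      rw [h1, hk j]
      simp [EuclideanSpace.single_apply]
      ring
    rw [hxeq]
    refine Submodule.add_mem _ ?_ (Submodule.sum_mem _ fun i _ => ?_)
    · exact Submodule.subset_span (Or.inr ⟨w, hw, rfl⟩)
    · exact Submodule.smul_mem _ _ (Submodule.subset_span (Or.inl ⟨i, rfl⟩))

end CodeEutaxyAux
namespace CodeEutaxyAux

variable {n : ℕ}

lemma quarter_le (k : ℤ) : (1/4 : ℝ) ≤ (1/2 + (k:ℝ)) * (1/2 + (k:ℝ)) := by
  rcases le_or_gt 0 k with h | h
  · have h' : (0:ℝ) ≤ (k:ℝ) := by exact_mod_cast h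
    nlinarith
  · have h' : (k:ℝ) ≤ -1 := by exact_mod_cast (by omega : k ≤ -1)
    nlinarith

lemma exists_ne_of_ne_zero {x : EuclideanSpace ℝ (Fin n)} (hx : x ≠ 0) :
    ∃ i, x i ≠ 0 := by
  by_contra h
  push_neg at h
  exact hx (PiLp.ext fun i => by simpa using h i)

lemma hammingNorm_eq_card (w : Fin n → ZMod 2) :
    hammingNorm w = (Finset.univ.filter fun i => w i ≠ 0).card := rfl

lemma one_le_normsq (C : Submodule (ZMod 2) (Fin n → ZMod 2))
    (hC : ∀ w ∈ C, w ≠ 0 → 4 ≤ hammingNorm w)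
    (x : EuclideanSpace ℝ (Fin n)) (hx : x ∈ codeLattice C) (hx0 : x ≠ 0) :
    1 ≤ ∑ i, x i * x i := by
  obtain ⟨w, hw, hk0⟩ := (mem_codeLattice C x).1 hx
  choose k hk using hk0
  by_cases hw0 : w = 0
  · subst hw0
    obtain ⟨i0, hi0⟩ := exists_ne_of_ne_zero hx0
    have hxi : ∀ i, x i = (k i : ℝ) := by
      intro i
      rw [hk i, show ((0 : Fin n → ZMod 2) i).val = 0 from by
        rw [Pi.zero_apply]; decide]
      norm_num
    have hki0 : k i0 ≠ 0 := by
      intro h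
      exact hi0 (by rw [hxi i0, h]; norm_num)
    have h1 : 1 ≤ x i0 * x i0 := by
      rw [hxi i0]
      have : 1 ≤ k i0 * k i0 := by rcases lt_or_gt_of_ne hki0 with h | h <;> nlinarith
      have h := (Int.cast_le (R := ℝ)).2 this; push_cast at h; exact h
    calc (1:ℝ) ≤ x i0 * x i0 := h1
      _ ≤ ∑ i, x i * x i :=
        Finset.single_le_sum (fun i _ => mul_self_nonneg (x i)) (Finset.mem_univ i0)
  · have h4 : 4 ≤ (Finset.univ.filter fun i => w i ≠ 0).card := by
      rw [← hammingNorm_eq_card]; exact hC w hw hw0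
    have hquarter : ∀ i ∈ Finset.univ.filter fun i => w i ≠ 0, (1/4 : ℝ) ≤ x i * x i := by
      intro i hi
      have hwi : w i ≠ 0 := (Finset.mem_filter.1 hi).2
      have : x i = 1/2 + (k i : ℝ) := by rw [hk i, val_of_ne hwi]
      rw [this]; exact quarter_le (k i)
    calc (1:ℝ) = 4 * (1/4) := by norm_num
      _ ≤ ((Finset.univ.filter fun i => w i ≠ 0).card : ℝ) * (1/4) := by
          have : (4:ℝ) ≤ ((Finset.univ.filter fun i => w i ≠ 0).card : ℝ) := by
            exact_mod_cast h4
          linarith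
      _ ≤ ∑ i ∈ Finset.univ.filter fun i => w i ≠ 0, x i * x i := by
          rw [show (((Finset.univ.filter fun i => w i ≠ 0).card : ℝ) * (1/4))
            = (Finset.univ.filter fun i => w i ≠ 0).card • (1/4 : ℝ) from by
              rw [nsmul_eq_mul]]
          exact Finset.card_nsmul_le_sum _ _ _ hquarter
      _ ≤ ∑ i, x i * x i :=
          Finset.sum_le_sum_of_subset_of_nonneg (Finset.filter_subset _ _)
            (fun i _ _ => mul_self_nonneg (x i))

lemma single_mem_codeLattice (C : Submodule (ZMod 2) (Fin n → ZMod 2)) (i : Fin n) :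
    EuclideanSpace.single i (1:ℝ) ∈ codeLattice C :=
  Submodule.subset_span (Or.inl ⟨i, rfl⟩)

lemma single_ne_zero' (i : Fin n) : EuclideanSpace.single i (1:ℝ) ≠ 0 := by
  intro h
  have h0 : (EuclideanSpace.single i (1:ℝ)) i = (0 : EuclideanSpace ℝ (Fin n)) i := by rw [h]
  rw [EuclideanSpace.single_apply, if_pos rfl] at h0
  exact one_ne_zero h0

lemma sum_single_sq (i : Fin n) :
    ∑ j, (EuclideanSpace.single i (1:ℝ)) j * (EuclideanSpace.single i (1:ℝ)) j = 1 := by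
  simp [EuclideanSpace.single_apply]

lemma latticeMin_eq_one (C : Submodule (ZMod 2) (Fin n → ZMod 2))
    (hC : ∀ w ∈ C, w ≠ 0 → 4 ≤ hammingNorm w) (hn : 0 < n) :
    latticeMin (codeLattice C) = 1 := by
  have hmem : (1:ℝ) ∈ {r : ℝ | ∃ x ∈ codeLattice C, x ≠ 0 ∧ ⟪x, x⟫ = r} := by
    refine ⟨EuclideanSpace.single ⟨0, hn⟩ (1:ℝ), single_mem_codeLattice C _,
      single_ne_zero' _, ?_⟩
    rw [inner_self_eq, sum_single_sq]
  have hlb : ∀ r ∈ {r : ℝ | ∃ x ∈ codeLattice C, x ≠ 0 ∧ ⟪x, x⟫ = r}, 1 ≤ r := by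
    rintro r ⟨x, hx, hx0, rfl⟩
    rw [inner_self_eq]
    exact one_le_normsq C hC x hx hx0
  exact le_antisymm (csInf_le ⟨1, hlb⟩ hmem) (le_csInf ⟨1, hmem⟩ hlb)

end CodeEutaxyAux
namespace CodeEutaxyAux

open Finset

variable {n : ℕ}

/-- Weight-4 codewords. -/
def W4 (C : Submodule (ZMod 2) (Fin n → ZMod 2)) : Finset (Fin n → ZMod 2) :=
  @Finset.filter _ (fun w => w ∈ C ∧ hammingNorm w = 4) (Classical.decPred _) Finset.univ

lemma mem_W4 {C : Submodule (ZMod 2) (Fin n → ZMod 2)} {w : Fin n → ZMod 2} :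
    w ∈ W4 C ↔ w ∈ C ∧ hammingNorm w = 4 := by
  classical
  rw [W4, Finset.filter_congr_decidable, Finset.mem_filter]
  simp

/-- The minimal vectors supported on a weight-4 codeword. -/
def Hw (w : Fin n → ZMod 2) : Finset (EuclideanSpace ℝ (Fin n)) :=
  (Fintype.piFinset fun i => if w i = 0 then ({0} : Finset ℝ) else ({1/2, -1/2} : Finset ℝ)).map
    (WithLp.equiv 2 (Fin n → ℝ)).symm.toEmbedding

lemma mem_Hw {w : Fin n → ZMod 2} {v : EuclideanSpace ℝ (Fin n)} :
    v ∈ Hw w ↔ ∀ i, v i ∈ (if w i = 0 then ({0} : Finset ℝ) else ({1/2, -1/2} : Finset ℝ)) :=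
  by rw [Hw, Finset.mem_map_equiv]; exact Fintype.mem_piFinset

lemma mem_Hw' {w : Fin n → ZMod 2} {v : EuclideanSpace ℝ (Fin n)} (hv : v ∈ Hw w) :
    ∀ i, (w i = 0 → v i = 0) ∧ (w i ≠ 0 → (v i = 1/2 ∨ v i = -1/2)) := by
  intro i
  have h := mem_Hw.1 hv i
  constructor
  · intro h0; rw [if_pos h0] at h; simpa using h
  · intro h0; rw [if_neg h0] at h; simpa using h

open Classical in
/-- The full finite set of minimal vectors. -/
def T (C : Submodule (ZMod 2) (Fin n → ZMod 2)) : Finset (EuclideanSpace ℝ (Fin n)) :=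
  ((Finset.univ.image fun i : Fin n => EuclideanSpace.single i (1:ℝ)) ∪
    (Finset.univ.image fun i : Fin n => -EuclideanSpace.single i (1:ℝ))) ∪
  (W4 C).biUnion Hw

lemma mem_T {C : Submodule (ZMod 2) (Fin n → ZMod 2)} {x : EuclideanSpace ℝ (Fin n)} :
    x ∈ T C ↔ ((∃ i, x = EuclideanSpace.single i 1) ∨ (∃ i, x = -EuclideanSpace.single i 1))
      ∨ (∃ w ∈ W4 C, x ∈ Hw w) := by
  rw [T]
  simp only [Finset.mem_union, Finset.mem_biUnion, Finset.mem_image, Finset.mem_univ,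
    true_and]
  constructor
  · rintro ((⟨i, hi⟩ | ⟨i, hi⟩) | ⟨w, hw, hv⟩)
    · exact Or.inl (Or.inl ⟨i, hi.symm⟩)
    · exact Or.inl (Or.inr ⟨i, hi.symm⟩)
    · exact Or.inr ⟨w, hw, hv⟩
  · rintro ((⟨i, hi⟩ | ⟨i, hi⟩) | ⟨w, hw, hv⟩)
    · exact Or.inl (Or.inl ⟨i, hi.symm⟩)
    · exact Or.inl (Or.inr ⟨i, hi.symm⟩)
    · exact Or.inr ⟨w, hw, hv⟩

end CodeEutaxyAux
namespace CodeEutaxyAux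

open Finset

variable {n : ℕ}

lemma Hw_subset_minimal {C : Submodule (ZMod 2) (Fin n → ZMod 2)}
    {w : Fin n → ZMod 2} (hw : w ∈ C) (hw4 : hammingNorm w = 4)
    {v : EuclideanSpace ℝ (Fin n)} (hv : v ∈ Hw w) :
    v ∈ codeLattice C ∧ v ≠ 0 ∧ ∑ i, v i * v i = 1 := by
  have hv' := mem_Hw' hv
  have hcard : (Finset.univ.filter fun i => w i ≠ 0).card = 4 := by
    rw [← hammingNorm_eq_card]; exact hw4
  refine ⟨?_, ?_, ?_⟩
  · rw [mem_codeLattice]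
    refine ⟨w, hw, fun i => ?_⟩
    rcases eq_or_ne (w i) 0 with h0 | h0
    · refine ⟨0, ?_⟩
      rw [(hv' i).1 h0, h0, show (0 : ZMod 2).val = 0 from by decide]
      norm_num
    · rcases (hv' i).2 h0 with h | h
      · exact ⟨0, by rw [h, val_of_ne h0]; norm_num⟩
      · exact ⟨-1, by rw [h, val_of_ne h0]; norm_num⟩
  · have hne : (Finset.univ.filter fun i => w i ≠ 0).Nonempty := by
      rw [← Finset.card_pos, hcard]; norm_num
    obtain ⟨i, hi⟩ := hne
    have hwi : w i ≠ 0 := (Finset.mem_filter.1 hi).2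
    intro h
    have h0 : v i = 0 := by rw [h]; rfl
    rcases (hv' i).2 hwi with h' | h' <;> rw [h'] at h0 <;> norm_num at h0
  · rw [← Finset.sum_filter_add_sum_filter_not Finset.univ (fun i => w i ≠ 0)]
    have h2 : ∑ i ∈ Finset.univ.filter fun i => ¬ w i ≠ 0, v i * v i = 0 := by
      apply Finset.sum_eq_zero
      intro i hi
      have : w i = 0 := by
        have := (Finset.mem_filter.1 hi).2
        push_neg at this
        exact this
      rw [(hv' i).1 this]; ring
    have h1 : ∑ i ∈ Finset.univ.filter fun i => w i ≠ 0, v i * v i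
        = ∑ i ∈ Finset.univ.filter fun i => w i ≠ 0, (1/4 : ℝ) := by
      apply Finset.sum_congr rfl
      intro i hi
      have hwi : w i ≠ 0 := (Finset.mem_filter.1 hi).2
      rcases (hv' i).2 hwi with h | h <;> rw [h] <;> norm_num
    rw [h1, h2, Finset.sum_const, hcard]
    norm_num

lemma minimal_eq (C : Submodule (ZMod 2) (Fin n → ZMod 2))
    (hC : ∀ w ∈ C, w ≠ 0 → 4 ≤ hammingNorm w) (hn : 0 < n) :
    minimalVectors (codeLattice C) = ↑(T C) := by
  ext x
  rw [show (x ∈ minimalVectors (codeLattice C)) ↔ (x ∈ codeLattice C ∧ x ≠ 0 ∧ ⟪x, x⟫ = latticeMin (codeLattice C)) from Iff.rfl, Finset.mem_coe, mem_T]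
  constructor
  · rintro ⟨hxΛ, hx0, hxn⟩
    rw [latticeMin_eq_one C hC hn, inner_self_eq] at hxn
    obtain ⟨w, hw, hk0⟩ := (mem_codeLattice C x).1 hxΛ
    choose k hk using hk0
    by_cases hw0 : w = 0
    · -- integer vector of norm 1
      subst hw0
      have hxi : ∀ i, x i = (k i : ℝ) := by
        intro i
        rw [hk i, show ((0 : Fin n → ZMod 2) i).val = 0 from by
          rw [Pi.zero_apply]; decide]
        norm_num
      obtain ⟨i0, hi0⟩ := exists_ne_of_ne_zero hx0
      have hone : 1 ≤ x i0 * x i0 := by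
        rw [hxi i0]
        have hki0 : k i0 ≠ 0 := fun h => hi0 (by rw [hxi i0, h]; norm_num)
        have : 1 ≤ k i0 * k i0 := by rcases lt_or_gt_of_ne hki0 with h | h <;> nlinarith
        have h := (Int.cast_le (R := ℝ)).2 this; push_cast at h; exact h
      have hle : x i0 * x i0 ≤ 1 := by
        rw [← hxn]
        exact Finset.single_le_sum (fun i _ => mul_self_nonneg (x i)) (Finset.mem_univ i0)
      have heq : x i0 * x i0 = 1 := le_antisymm hle hone
      have hrest : ∀ i, i ≠ i0 → x i = 0 := by
        intro i hi
        have hsplit : x i0 * x i0 + ∑ j ∈ Finset.univ.erase i0, x j * x j = 1 := by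
          rw [← hxn]
          exact Finset.add_sum_erase Finset.univ (fun j => x j * x j) (Finset.mem_univ i0)
        have hz : ∑ j ∈ Finset.univ.erase i0, x j * x j = 0 := by linarith [heq, hsplit]
        have := (Finset.sum_eq_zero_iff_of_nonneg
          (fun j _ => mul_self_nonneg (x j))).1 hz i (Finset.mem_erase.2 ⟨hi, Finset.mem_univ i⟩)
        exact mul_self_eq_zero.1 this
      rcases mul_self_eq_one_iff.1 heq with h1 | h1
      · refine Or.inl (Or.inl ⟨i0, PiLp.ext fun j => ?_⟩)
        rw [EuclideanSpace.single_apply]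
        rcases eq_or_ne j i0 with rfl | hj
        · rw [if_pos rfl]; exact h1
        · rw [if_neg hj]; exact hrest j hj
      · refine Or.inl (Or.inr ⟨i0, PiLp.ext fun j => ?_⟩)
        rw [eval_neg, EuclideanSpace.single_apply]
        rcases eq_or_ne j i0 with rfl | hj
        · rw [if_pos rfl]; rw [h1]
        · rw [if_neg hj, neg_zero]; exact hrest j hj
    · -- half-integer case
      have h4 : 4 ≤ (Finset.univ.filter fun i => w i ≠ 0).card := by
        rw [← hammingNorm_eq_card]; exact hC w hw hw0
      set F := Finset.univ.filter fun i => w i ≠ 0 with hF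
      have hxF : ∀ i ∈ F, x i = 1/2 + (k i : ℝ) := by
        intro i hi
        rw [hk i, val_of_ne (Finset.mem_filter.1 hi).2]
      have hquarter : ∀ i ∈ F, (1/4 : ℝ) ≤ x i * x i := by
        intro i hi
        rw [hxF i hi]; exact quarter_le (k i)
      have hsplit : ∑ i ∈ F, x i * x i
          + ∑ i ∈ Finset.univ.filter (fun i => ¬ w i ≠ 0), x i * x i = 1 := by
        rw [Finset.sum_filter_add_sum_filter_not]; exact hxn
      have hrest_nonneg : 0 ≤ ∑ i ∈ Finset.univ.filter (fun i => ¬ w i ≠ 0), x i * x i :=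
        Finset.sum_nonneg fun i _ => mul_self_nonneg (x i)
      have hFlow : ((F.card : ℝ)) * (1/4) ≤ ∑ i ∈ F, x i * x i := by
        rw [show ((F.card : ℝ) * (1/4)) = F.card • (1/4 : ℝ) from by rw [nsmul_eq_mul]]
        exact Finset.card_nsmul_le_sum _ _ _ hquarter
      have hcard4 : F.card = 4 := by
        have h1 : ∑ i ∈ F, x i * x i ≤ 1 := by linarith
        have h2 : ((F.card : ℝ)) ≤ 4 := by
          have h3 : ((F.card : ℝ)) * (1/4) ≤ 1 := le_trans hFlow h1
          linarith
        have h4' : F.card ≤ 4 := by exact_mod_cast h2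
        omega
      have hsumF : ∑ i ∈ F, x i * x i = 1 := by
        have : (1:ℝ) ≤ ∑ i ∈ F, x i * x i := by
          rw [hcard4] at hFlow; norm_num at hFlow; linarith
        linarith
      have hrest0 : ∑ i ∈ Finset.univ.filter (fun i => ¬ w i ≠ 0), x i * x i = 0 := by
        linarith
      have hxzero : ∀ i, w i = 0 → x i = 0 := by
        intro i hi
        have hmem : i ∈ Finset.univ.filter (fun i => ¬ w i ≠ 0) := by
          rw [Finset.mem_filter]
          exact ⟨Finset.mem_univ i, by simp [hi]⟩
        have := (Finset.sum_eq_zero_iff_of_nonneg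
          (fun j _ => mul_self_nonneg (x j))).1 hrest0 i hmem
        exact mul_self_eq_zero.1 this
      have hxquarter : ∀ i ∈ F, x i * x i = 1/4 := by
        -- sum of (x i * x i - 1/4) over F is 0, each term nonneg
        have hzero : ∑ i ∈ F, (x i * x i - 1/4) = 0 := by
          rw [Finset.sum_sub_distrib, hsumF, Finset.sum_const, hcard4]
          norm_num
        intro i hi
        have := (Finset.sum_eq_zero_iff_of_nonneg
          (fun j hj => by linarith [hquarter j hj])).1 hzero i hi
        linarith [this]
      have hxhalf : ∀ i, w i ≠ 0 → (x i = 1/2 ∨ x i = -1/2) := by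
        intro i hi
        have hiF : i ∈ F := Finset.mem_filter.2 ⟨Finset.mem_univ i, hi⟩
        have := hxquarter i hiF
        have h' : x i * x i = (1/2 : ℝ) * (1/2) := by rw [this]; norm_num
        rcases mul_self_eq_mul_self_iff.1 h' with h | h
        · exact Or.inl h
        · exact Or.inr (by rw [h]; norm_num)
      refine Or.inr ⟨w, mem_W4.2 ⟨hw, by rw [hammingNorm_eq_card, ← hF, hcard4]⟩, ?_⟩
      rw [mem_Hw]
      intro i
      rcases eq_or_ne (w i) 0 with h0 | h0
      · rw [if_pos h0]
        simp [hxzero i h0]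
      · rw [if_neg h0]
        rcases hxhalf i h0 with h | h <;> simp [h]
  · rintro ((⟨i, rfl⟩ | ⟨i, rfl⟩) | ⟨w, hwW, hv⟩)
    · exact ⟨single_mem_codeLattice C i, single_ne_zero' i, by
        rw [latticeMin_eq_one C hC hn, inner_self_eq, sum_single_sq]⟩
    · refine ⟨Submodule.neg_mem _ (single_mem_codeLattice C i),
        neg_ne_zero.2 (single_ne_zero' i), ?_⟩
      rw [latticeMin_eq_one C hC hn, inner_self_eq]
      have : ∑ j, (-EuclideanSpace.single i (1:ℝ)) j * (-EuclideanSpace.single i (1:ℝ)) j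
          = ∑ j, (EuclideanSpace.single i (1:ℝ)) j * (EuclideanSpace.single i (1:ℝ)) j := by
        apply Finset.sum_congr rfl
        intro j _
        rw [eval_neg]; ring
      rw [this, sum_single_sq]
    · obtain ⟨hwC, hw4⟩ := mem_W4.1 hwW
      obtain ⟨h1, h2, h3⟩ := Hw_subset_minimal hwC hw4 hv
      exact ⟨h1, h2, by rw [latticeMin_eq_one C hC hn, inner_self_eq, h3]⟩

end CodeEutaxyAux
namespace CodeEutaxyAux

open Finset

variable {n : ℕ}

/-- Number of weight-4 codewords supported at `i`. -/
def mcount (C : Submodule (ZMod 2) (Fin n → ZMod 2)) (i : Fin n) : ℕ :=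
  ((W4 C).filter fun w => w i ≠ 0).card

/-- The small coefficient used on the half-integer minimal vectors. -/
def cc (C : Submodule (ZMod 2) (Fin n → ZMod 2)) : ℝ :=
  (8 * ((W4 C).card + 1) : ℝ)⁻¹

/-- The coefficient used on `±eᵢ`. -/
def mu (C : Submodule (ZMod 2) (Fin n → ZMod 2)) (i : Fin n) : ℝ :=
  (1 - 4 * cc C * mcount C i) / 2

lemma cc_pos (C : Submodule (ZMod 2) (Fin n → ZMod 2)) : 0 < cc C := by
  rw [cc]; positivity

lemma four_cc_mcount_lt_one (C : Submodule (ZMod 2) (Fin n → ZMod 2)) (i : Fin n) :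
    4 * cc C * mcount C i < 1 := by
  have hm : (mcount C i : ℝ) ≤ ((W4 C).card : ℝ) := by
    exact_mod_cast Finset.card_filter_le _ _
  have h8 : (0:ℝ) < 8 * (((W4 C).card : ℝ) + 1) := by positivity
  rw [cc]
  rw [show (8 * (((W4 C).card : ℕ) + 1) : ℝ) = 8 * (((W4 C).card : ℝ) + 1) from by norm_num]
  rw [show (4 * (8 * (((W4 C).card : ℝ) + 1))⁻¹ * (mcount C i : ℝ))
      = (4 * (mcount C i : ℝ)) / (8 * (((W4 C).card : ℝ) + 1)) from by ring]
  rw [div_lt_one h8]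
  linarith

lemma mu_pos (C : Submodule (ZMod 2) (Fin n → ZMod 2)) (i : Fin n) : 0 < mu C i := by
  have := four_cc_mcount_lt_one C i
  rw [mu]
  linarith

open Classical in
/-- The eutaxy coefficients. -/
def lamF (C : Submodule (ZMod 2) (Fin n → ZMod 2)) :
    EuclideanSpace ℝ (Fin n) → ℝ := fun v =>
  if ∀ i, ∃ k : ℤ, v i = (k : ℝ) then ∑ i, v i * v i * mu C i else cc C

lemma lam_neg (C : Submodule (ZMod 2) (Fin n → ZMod 2)) (v : EuclideanSpace ℝ (Fin n)) :
    lamF C (-v) = lamF C v := by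
  have hcond : (∀ i, ∃ k : ℤ, (-v) i = (k : ℝ)) ↔ (∀ i, ∃ k : ℤ, v i = (k : ℝ)) := by
    constructor <;> intro h i <;> obtain ⟨k, hk⟩ := h i
    · refine ⟨-k, ?_⟩
      rw [eval_neg] at hk
      push_cast
      linarith

    · refine ⟨-k, ?_⟩
      rw [eval_neg, hk]
      push_cast
      ring
  simp only [lamF]
  by_cases h : ∀ i, ∃ k : ℤ, v i = (k : ℝ)
  · rw [if_pos (hcond.2 h), if_pos h]
    apply Finset.sum_congr rfl
    intro i _
    rw [eval_neg]
    ring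
  · rw [if_neg (fun hc => h (hcond.1 hc)), if_neg h]

lemma lam_single (C : Submodule (ZMod 2) (Fin n → ZMod 2)) (i : Fin n) :
    lamF C (EuclideanSpace.single i (1:ℝ)) = mu C i := by
  rw [lamF, if_pos]
  · rw [show ∑ j, (EuclideanSpace.single i (1:ℝ)) j * (EuclideanSpace.single i (1:ℝ)) j * mu C j
        = ∑ j, if j = i then mu C j else 0 from Finset.sum_congr rfl fun j _ => by
          rw [EuclideanSpace.single_apply]; split <;> ring]
    rw [Finset.sum_ite_eq' Finset.univ i (fun j => mu C j), if_pos (Finset.mem_univ i)]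
  · intro j
    refine ⟨if j = i then 1 else 0, ?_⟩
    rw [EuclideanSpace.single_apply]
    split <;> simp

lemma int_ne_half (k : ℤ) : (k : ℝ) ≠ 1/2 := by
  intro h
  have h2 : ((2 * k : ℤ) : ℝ) = 1 := by push_cast; linarith
  have : (2 * k : ℤ) = 1 := by exact_mod_cast h2
  omega

lemma int_ne_neg_half (k : ℤ) : (k : ℝ) ≠ -(1/2) := by
  intro h
  have h2 : ((2 * k : ℤ) : ℝ) = -1 := by push_cast; linarith
  have : (2 * k : ℤ) = -1 := by exact_mod_cast h2
  omega

lemma lam_Hw (C : Submodule (ZMod 2) (Fin n → ZMod 2)) {w : Fin n → ZMod 2}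
    (hw4 : hammingNorm w = 4) {v : EuclideanSpace ℝ (Fin n)} (hv : v ∈ Hw w) :
    lamF C v = cc C := by
  rw [lamF, if_neg]
  intro hcond
  have hne : ∃ i, w i ≠ 0 := by
    by_contra h
    push_neg at h
    have hw0 : w = 0 := funext h
    rw [hw0] at hw4
    rw [show hammingNorm (0 : Fin n → ZMod 2) = 0 from by simp] at hw4
    omega
  obtain ⟨i, hi⟩ := hne
  obtain ⟨k, hk⟩ := hcond i
  rcases (mem_Hw' hv i).2 hi with h | h
  · exact int_ne_half k (by rw [← hk, h])
  · exact int_ne_neg_half k (by rw [← hk, h]; norm_num)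

/-- The key computation: the sum of `vᵢvⱼ` over the minimal vectors supported
on a fixed weight-4 codeword. -/
lemma sum_Hw_mul {w : Fin n → ZMod 2} (hw4 : hammingNorm w = 4) (i j : Fin n) :
    ∑ v ∈ Hw w, v i * v j = if i = j ∧ w i ≠ 0 then 4 else 0 := by
  classical
  set t : Fin n → Finset ℝ :=
    fun a => if w a = 0 then ({0} : Finset ℝ) else ({1/2, -1/2} : Finset ℝ) with ht
  have hstep : ∑ v ∈ Hw w, v i * v j
      = ∑ v ∈ Fintype.piFinset t, ∏ a, ((if a = i then v a else 1) * (if a = j then v a else 1)) := by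
    rw [Hw, Finset.sum_map]
    refine Finset.sum_congr rfl fun v _ => ?_
    rw [Finset.prod_mul_distrib, Finset.prod_ite_eq' Finset.univ i (fun a => v a),
      Finset.prod_ite_eq' Finset.univ j (fun a => v a), if_pos (Finset.mem_univ i),
      if_pos (Finset.mem_univ j)]
    rfl
  rw [hstep, show (∑ v ∈ Fintype.piFinset t,
      ∏ a, ((if a = i then v a else 1) * (if a = j then v a else 1)))
      = ∏ a, ∑ x ∈ t a, ((if a = i then x else 1) * (if a = j then x else 1)) from
    (Finset.prod_univ_sum t (fun a x => (if a = i then x else 1) * (if a = j then x else 1))).symm]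
  by_cases hij : i = j
  · subst hij
    by_cases hwi : w i = 0
    · rw [if_neg (by simp [hwi])]
      apply Finset.prod_eq_zero (Finset.mem_univ i)
      rw [show t i = {0} from by rw [ht]; simp [hwi]]
      simp
    · rw [if_pos ⟨rfl, hwi⟩]
      rw [← Finset.mul_prod_erase Finset.univ _ (Finset.mem_univ i)]
      have hgi : (∑ x ∈ t i, ((if i = i then x else 1) * (if i = i then x else 1))) = 1/2 := by
        rw [show t i = {1/2, -1/2} from by rw [ht]; simp [hwi]]
        norm_num
      have hrest : ∀ a ∈ Finset.univ.erase i,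
          (∑ x ∈ t a, ((if a = i then x else 1) * (if a = i then x else 1)))
            = (if w a ≠ 0 then (2:ℝ) else 1) := by
        intro a ha
        have hai : a ≠ i := Finset.ne_of_mem_erase ha
        simp only [if_neg hai, one_mul]
        by_cases hwa : w a = 0
        · rw [show t a = {0} from by rw [ht]; simp [hwa], if_neg (by simp [hwa])]
          simp
        · rw [show t a = {1/2, -1/2} from by rw [ht]; simp [hwa], if_pos hwa]
          norm_num
      rw [hgi, Finset.prod_congr rfl hrest, Finset.prod_ite (fun _ => (2:ℝ)) (fun _ => (1:ℝ))]
      rw [Finset.prod_const, Finset.prod_const]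
      have hcardset : (Finset.univ.erase i).filter (fun a => w a ≠ 0)
          = (Finset.univ.filter fun a => w a ≠ 0).erase i := by
        ext a
        simp only [Finset.mem_filter, Finset.mem_erase, Finset.mem_univ, true_and]
        tauto
      have hc : ((Finset.univ.erase i).filter (fun a => w a ≠ 0)).card = 3 := by
        rw [hcardset, Finset.card_erase_of_mem
          (Finset.mem_filter.2 ⟨Finset.mem_univ i, hwi⟩), ← hammingNorm_eq_card, hw4]
      rw [hc]
      norm_num
  · rw [if_neg (by simp [hij])]
    apply Finset.prod_eq_zero (Finset.mem_univ i)
    rw [show (∑ x ∈ t i, ((if i = i then x else 1) * (if i = j then x else 1)))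
        = ∑ x ∈ t i, x from Finset.sum_congr rfl fun x _ => by
          rw [if_pos rfl, if_neg hij, mul_one]]
    by_cases hwi : w i = 0
    · rw [show t i = {0} from by rw [ht]; simp [hwi]]
      simp
    · rw [show t i = {1/2, -1/2} from by rw [ht]; simp [hwi]]
      norm_num

end CodeEutaxyAux
namespace CodeEutaxyAux

open Finset

variable {n : ℕ}

open Classical in
lemma Hw_vals {C : Submodule (ZMod 2) (Fin n → ZMod 2)}
    {v : EuclideanSpace ℝ (Fin n)} (hv : v ∈ (W4 C).biUnion Hw) (a : Fin n) :
    v a = 0 ∨ v a = 1/2 ∨ v a = -(1/2) := by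
  obtain ⟨w, hw, hvw⟩ := Finset.mem_biUnion.1 hv
  have h := mem_Hw' hvw a
  rcases eq_or_ne (w a) 0 with h0 | h0
  · exact Or.inl (h.1 h0)
  · rcases h.2 h0 with h' | h'
    · exact Or.inr (Or.inl h')
    · exact Or.inr (Or.inr (by rw [h']; norm_num))

lemma final_sum (C : Submodule (ZMod 2) (Fin n → ZMod 2)) :
    ∑ v ∈ T C, lamF C v • (Matrix.of fun i j => v i * v j)
      = (1 : Matrix (Fin n) (Fin n) ℝ) := by
  classical
  ext i j
  rw [Matrix.sum_apply]
  simp only [Matrix.smul_apply, Matrix.of_apply, smul_eq_mul, Matrix.one_apply]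
  rw [T]
  have hd12 : Disjoint (Finset.univ.image fun a : Fin n => EuclideanSpace.single a (1:ℝ))
      (Finset.univ.image fun a : Fin n => -EuclideanSpace.single a (1:ℝ)) := by
    rw [Finset.disjoint_left]
    rintro v hv1 hv2
    obtain ⟨a, -, ha⟩ := Finset.mem_image.1 hv1
    obtain ⟨b, -, hb⟩ := Finset.mem_image.1 hv2
    have h1 : v a = 1 := by rw [← ha, EuclideanSpace.single_apply, if_pos rfl]
    have h2 : v a = -(if a = b then (1:ℝ) else 0) := by
      rw [← hb, eval_neg, EuclideanSpace.single_apply]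
    by_cases hab : a = b
    · rw [if_pos hab, h1] at h2; norm_num at h2
    · rw [if_neg hab, h1] at h2; norm_num at h2
  have hd3 : Disjoint
      ((Finset.univ.image fun a : Fin n => EuclideanSpace.single a (1:ℝ)) ∪
        (Finset.univ.image fun a : Fin n => -EuclideanSpace.single a (1:ℝ)))
      ((W4 C).biUnion Hw) := by
    rw [Finset.disjoint_left]
    rintro v hv hvH
    rcases Finset.mem_union.1 hv with h | h
    · obtain ⟨a, -, ha⟩ := Finset.mem_image.1 h
      have h1 : v a = 1 := by rw [← ha, EuclideanSpace.single_apply, if_pos rfl]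
      rcases Hw_vals hvH a with h' | h' | h' <;> rw [h1] at h' <;> norm_num at h'
    · obtain ⟨a, -, ha⟩ := Finset.mem_image.1 h
      have h1 : v a = -1 := by
        rw [← ha, eval_neg, EuclideanSpace.single_apply, if_pos rfl]
      rcases Hw_vals hvH a with h' | h' | h' <;> rw [h1] at h' <;> norm_num at h'
  have hdH : Set.PairwiseDisjoint (↑(W4 C) : Set (Fin n → ZMod 2)) Hw := by
    intro w hw w' hw' hne
    refine Finset.disjoint_left.2 fun v hv hv' => hne ?_
    funext a
    have h1 := mem_Hw' hv a
    have h2 := mem_Hw' hv' a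
    rcases zmod2_cases (w a) with ha | ha <;> rcases zmod2_cases (w' a) with hb | hb
    · rw [ha, hb]
    · exfalso
      have hz : v a = 0 := h1.1 ha
      have hnz : w' a ≠ 0 := by rw [hb]; decide
      rcases h2.2 hnz with h' | h' <;> rw [hz] at h' <;> norm_num at h'
    · exfalso
      have hz : v a = 0 := h2.1 hb
      have hnz : w a ≠ 0 := by rw [ha]; decide
      rcases h1.2 hnz with h' | h' <;> rw [hz] at h' <;> norm_num at h'
    · rw [ha, hb]
  rw [Finset.sum_union hd3, Finset.sum_union hd12, Finset.sum_biUnion hdH]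
  have h1inj : ∀ a ∈ Finset.univ, ∀ b ∈ Finset.univ,
      (fun a : Fin n => EuclideanSpace.single a (1:ℝ)) a
        = (fun a : Fin n => EuclideanSpace.single a (1:ℝ)) b → a = b := by
    intro a _ b _ h
    by_contra hab
    have h' : (EuclideanSpace.single a (1:ℝ)) a = (EuclideanSpace.single b (1:ℝ)) a := by
      rw [show EuclideanSpace.single a (1:ℝ) = EuclideanSpace.single b (1:ℝ) from h]
    rw [EuclideanSpace.single_apply, EuclideanSpace.single_apply, if_pos rfl,
      if_neg hab] at h'
    norm_num at h'
  have h2inj : ∀ a ∈ Finset.univ, ∀ b ∈ Finset.univ,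
      (fun a : Fin n => -EuclideanSpace.single a (1:ℝ)) a
        = (fun a : Fin n => -EuclideanSpace.single a (1:ℝ)) b → a = b := by
    intro a _ b _ h
    by_contra hab
    have h' : (-EuclideanSpace.single a (1:ℝ)) a = (-EuclideanSpace.single b (1:ℝ)) a := by
      rw [show -EuclideanSpace.single a (1:ℝ) = -EuclideanSpace.single b (1:ℝ) from h]
    rw [eval_neg, eval_neg, EuclideanSpace.single_apply, EuclideanSpace.single_apply,
      if_pos rfl, if_neg hab] at h'
    norm_num at h'
  rw [Finset.sum_image h1inj, Finset.sum_image h2inj]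
  have hA : ∑ a, lamF C (EuclideanSpace.single a (1:ℝ))
      * ((EuclideanSpace.single a (1:ℝ)) i * (EuclideanSpace.single a (1:ℝ)) j)
      = if i = j then mu C i else 0 := by
    rcases eq_or_ne i j with rfl | hij
    · rw [if_pos rfl]
      have hterm : ∀ a ∈ Finset.univ, lamF C (EuclideanSpace.single a (1:ℝ))
          * ((EuclideanSpace.single a (1:ℝ)) i * (EuclideanSpace.single a (1:ℝ)) i)
          = if i = a then mu C a else 0 := by
        intro a _
        rw [lam_single, EuclideanSpace.single_apply]
        by_cases h : i = a <;> simp [h]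
      rw [Finset.sum_congr rfl hterm, Finset.sum_ite_eq Finset.univ i (fun a => mu C a),
        if_pos (Finset.mem_univ i)]
    · rw [if_neg hij]
      apply Finset.sum_eq_zero
      intro a _
      rw [EuclideanSpace.single_apply, EuclideanSpace.single_apply]
      by_cases h1 : i = a
      · rw [if_pos h1, if_neg (fun h2 => hij (h1.trans h2.symm))]
        ring
      · rw [if_neg h1]
        ring
  have hB : ∑ a, lamF C (-EuclideanSpace.single a (1:ℝ))
      * ((-EuclideanSpace.single a (1:ℝ)) i * (-EuclideanSpace.single a (1:ℝ)) j)
      = if i = j then mu C i else 0 := by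
    rw [← hA]
    apply Finset.sum_congr rfl
    intro a _
    rw [lam_neg, eval_neg, eval_neg]
    ring
  have hH : ∑ w ∈ W4 C, ∑ v ∈ Hw w, lamF C v * (v i * v j)
      = if i = j then cc C * 4 * (mcount C i : ℝ) else 0 := by
    have hterm : ∀ w ∈ W4 C, ∑ v ∈ Hw w, lamF C v * (v i * v j)
        = cc C * (if i = j ∧ w i ≠ 0 then (4:ℝ) else 0) := by
      intro w hw
      have hw4 := (mem_W4.1 hw).2
      rw [show ∑ v ∈ Hw w, lamF C v * (v i * v j) = ∑ v ∈ Hw w, cc C * (v i * v j) from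
        Finset.sum_congr rfl fun v hv => by rw [lam_Hw C hw4 hv]]
      rw [← Finset.mul_sum, sum_Hw_mul hw4]
    rw [Finset.sum_congr rfl hterm]
    rcases eq_or_ne i j with rfl | hij
    · rw [if_pos rfl]
      have hsimp : ∀ w ∈ W4 C, cc C * (if i = i ∧ w i ≠ 0 then (4:ℝ) else 0)
          = cc C * (if w i ≠ 0 then (4:ℝ) else 0) := by
        intro w _
        simp
      rw [Finset.sum_congr rfl hsimp, ← Finset.mul_sum]
      rw [show (∑ w ∈ W4 C, if w i ≠ 0 then (4:ℝ) else 0)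
          = ∑ w ∈ (W4 C).filter (fun w => w i ≠ 0), (4:ℝ) from
        (Finset.sum_filter _ _).symm]
      rw [Finset.sum_const, mcount, nsmul_eq_mul]
      ring
    · rw [if_neg hij]
      apply Finset.sum_eq_zero
      intro w _
      rw [if_neg (fun h => hij h.1)]
      ring
  rcases eq_or_ne i j with rfl | hij
  · rw [hA, hB, hH, if_pos rfl, if_pos rfl, if_pos rfl, mu]
    ring
  · rw [hA, hB, hH, if_neg hij, if_neg hij, if_neg hij]
    norm_num

end CodeEutaxyAux
/-- Let `C ⊆ 𝔽₂ⁿ` be a binary linear code all of whose nonzero words have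
Hamming weight `≥ 4`.  Then the lattice `Λ_C` is eutactic: there are strictly
positive reals `λ_v` indexed by the minimal vectors `v ∈ S(Λ_C)`, with
`λ_{−v} = λ_v`, such that `∑_{v ∈ S(Λ_C)} λ_v · v·vᵀ = Idₙ`. -/
theorem codeLattice_eutactic {n : ℕ}
    (C : Submodule (ZMod 2) (Fin n → ZMod 2))
    (hC : ∀ w ∈ C, w ≠ 0 → 4 ≤ hammingNorm w) :
    ∃ lam : EuclideanSpace ℝ (Fin n) → ℝ,
      (∀ v ∈ minimalVectors (codeLattice C), 0 < lam v) ∧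
      (∀ v, lam (-v) = lam v) ∧
      (∑ᶠ v ∈ minimalVectors (codeLattice C),
          lam v • (Matrix.of fun i j => v i * v j))
        = (1 : Matrix (Fin n) (Fin n) ℝ) := by
  rcases Nat.eq_zero_or_pos n with hn | hn
  · subst hn
    refine ⟨fun _ => 1, fun v _ => one_pos, fun v => rfl, ?_⟩
    have hempty : minimalVectors (codeLattice C) = (∅ : Set (EuclideanSpace ℝ (Fin 0))) := by
      ext x
      simp only [Set.mem_empty_iff_false, iff_false]
      rintro ⟨-, hx0, -⟩
      exact hx0 (Subsingleton.elim x 0)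
    rw [hempty, finsum_mem_empty]
    ext i j
    exact i.elim0
  · refine ⟨CodeEutaxyAux.lamF C, ?_, CodeEutaxyAux.lam_neg C, ?_⟩
    · intro v hv
      rw [CodeEutaxyAux.minimal_eq C hC hn, Finset.mem_coe, CodeEutaxyAux.mem_T] at hv
      rcases hv with (⟨i, rfl⟩ | ⟨i, rfl⟩) | ⟨w, hw, hv⟩
      · rw [CodeEutaxyAux.lam_single]
        exact CodeEutaxyAux.mu_pos C i
      · rw [CodeEutaxyAux.lam_neg, CodeEutaxyAux.lam_single]
        exact CodeEutaxyAux.mu_pos C i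
      · rw [CodeEutaxyAux.lam_Hw C (CodeEutaxyAux.mem_W4.1 hw).2 hv]
        exact CodeEutaxyAux.cc_pos C
    · rw [CodeEutaxyAux.minimal_eq C hC hn, finsum_mem_coe_finset]
      exact CodeEutaxyAux.final_sum C
end
end

section
/- Let Λ be a well-rounded lattice in ℝ⁹ (i.e. its minimal vectors span ℝ⁹) having an E₈-section with the same minimum: there is an 8-dimensional linear subspace H ⊆ ℝ⁹ such that Λ ∩ H is similar to the root lattice E₈ with min(Λ ∩ H) = min Λ. Then no lattice L in ℝ⁹ with min L = min Λ strictly contains Λ. -/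
open scoped BigOperators RealInnerProductSpace

noncomputable section

/-- The root lattice `Dₙ = {x ∈ ℤⁿ : x₁ + … + xₙ ≡ 0 (mod 2)}`. -/
def Dlattice (n : ℕ) : Submodule ℤ (EuclideanSpace ℝ (Fin n)) where
  carrier := {x | ∃ c : Fin n → ℤ, 2 ∣ (∑ i, c i) ∧ ∀ i, x i = (c i : ℝ)}
  zero_mem' := ⟨0, by simp, fun i => by simp⟩
  add_mem' := by
    rintro x y ⟨c, hc, hxc⟩ ⟨d, hd, hyd⟩
    refine ⟨c + d, ?_, fun i => ?_⟩
    · simpa [Finset.sum_add_distrib] using dvd_add hc hd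
    · simp [hxc i, hyd i]
  smul_mem' := by
    rintro z x ⟨c, hc, hxc⟩
    refine ⟨z • c, ?_, fun i => ?_⟩
    · simpa [Finset.mul_sum] using hc.mul_left z
    · simp [hxc i, Pi.smul_apply, zsmul_eq_mul]

/-- The root lattice `E₈ = D₈ ∪ ((½, …, ½) + D₈)`, i.e. the lattice generated
by `D₈` together with the vector `(½, …, ½)`. -/
def E8lattice : Submodule ℤ (EuclideanSpace ℝ (Fin 8)) :=
  Dlattice 8 ⊔ Submodule.span ℤ {(WithLp.toLp 2 (fun _ => (1 : ℝ) / 2) : EuclideanSpace ℝ (Fin 8))}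


open Finset

lemma sum_update_gen {β : Type*} [AddCommGroup β] (q q' : Fin 8 → β) (i₀ : Fin 8)
    (h : ∀ i, i ≠ i₀ → q' i = q i) :
    ∑ i, q' i = ∑ i, q i - q i₀ + q' i₀ := by
  have h1 := Finset.sum_erase_add Finset.univ q' (Finset.mem_univ i₀)
  have h2 := Finset.sum_erase_add Finset.univ q (Finset.mem_univ i₀)
  have h3 : ∑ i ∈ Finset.univ.erase i₀, q' i = ∑ i ∈ Finset.univ.erase i₀, q i :=
    Finset.sum_congr rfl fun i hi => h i (Finset.ne_of_mem_erase hi)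
  rw [← h1, ← h2, h3]; abel

lemma memD8E8 (c : Fin 8 → ℤ) (hc : 2 ∣ ∑ i, c i) :
    (WithLp.toLp 2 (fun i => (c i : ℝ)) : EuclideanSpace ℝ (Fin 8)) ∈ E8lattice :=
  Submodule.mem_sup_left (⟨c, hc, fun _ => rfl⟩ : _ ∈ Dlattice 8)

lemma memHalfE8 (c : Fin 8 → ℤ) (hc : 2 ∣ ∑ i, c i) :
    (WithLp.toLp 2 (fun i => (c i : ℝ) + 1/2) : EuclideanSpace ℝ (Fin 8)) ∈ E8lattice := by
  have h1 : (WithLp.toLp 2 (fun i => (c i : ℝ)) : EuclideanSpace ℝ (Fin 8)) ∈ Dlattice 8 :=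
    ⟨c, hc, fun _ => rfl⟩
  have h2 : (WithLp.toLp 2 (fun _ => (1:ℝ)/2) : EuclideanSpace ℝ (Fin 8)) ∈
      Submodule.span ℤ {(WithLp.toLp 2 (fun _ => (1:ℝ)/2) : EuclideanSpace ℝ (Fin 8))} :=
    Submodule.mem_span_singleton_self _
  have := Submodule.add_mem_sup h1 h2
  convert this using 1
  · rfl
  · ext i; simp

lemma E8_covering (x : EuclideanSpace ℝ (Fin 8)) :
    ∃ e ∈ E8lattice, ∑ i, (x i - e i)^2 ≤ 1 := by
  set c : Fin 8 → ℤ := fun i => round (x i) with hc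
  set u : Fin 8 → ℝ := fun i => x i - c i with hudef
  have hu : ∀ i, |u i| ≤ 1/2 := fun i => abs_sub_round (x i)
  set f : Fin 8 → ℝ := fun i => |u i| with hf
  have hf0 : ∀ i, 0 ≤ f i := fun i => abs_nonneg _
  have hfhalf : ∀ i, f i ≤ 1/2 := hu
  obtain ⟨i₀, -, hmax⟩ := Finset.exists_max_image Finset.univ f ⟨0, Finset.mem_univ 0⟩
  set g : Fin 8 → ℝ := fun i => 1/2 - f i with hg
  have hg0 : ∀ i, 0 ≤ g i := fun i => by simp only [hg]; linarith [hfhalf i]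
  have hghalf : ∀ i, g i ≤ 1/2 := fun i => by simp only [hg]; linarith [hf0 i]
  clear_value c u f g
  obtain ⟨i₁, -, hmaxg⟩ := Finset.exists_max_image Finset.univ g ⟨0, Finset.mem_univ 0⟩
  have hdich : (∑ i, f i ^ 2) ≤ 2 * f i₀ ∨ (∑ i, g i ^ 2) ≤ 2 * g i₁ := by
    by_contra hcon
    push_neg at hcon
    obtain ⟨h1, h2⟩ := hcon
    have hS : (∑ i, f i ^ 2) ≤ f i₀ * ∑ i, f i := by
      rw [Finset.mul_sum]
      exact Finset.sum_le_sum fun i _ => by nlinarith [hmax i (Finset.mem_univ i), hf0 i]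
    have hT : (∑ i, g i ^ 2) ≤ g i₁ * ∑ i, g i := by
      rw [Finset.mul_sum]
      exact Finset.sum_le_sum fun i _ => by nlinarith [hmaxg i (Finset.mem_univ i), hg0 i]
    have hgs : (∑ i, g i) = 4 - ∑ i, f i := by
      simp only [hg]
      rw [Finset.sum_sub_distrib, Finset.sum_const, Finset.card_univ]
      norm_num
    have hF : 0 < f i₀ := by
      rcases (hf0 i₀).lt_or_eq with h | h
      · exact h
      · exfalso; rw [← h] at hS h1; rw [zero_mul] at hS; linarith
    have hG : 0 < g i₁ := by
      rcases (hg0 i₁).lt_or_eq with h | h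
      · exact h
      · exfalso; rw [← h] at hT h2; rw [zero_mul] at hT; linarith
    have hA : 2 < ∑ i, f i := by
      by_contra hA
      push_neg at hA
      nlinarith
    have hB : ∑ i, f i < 2 := by
      by_contra hB
      push_neg at hB
      nlinarith
    linarith
  have hsqf : ∀ i, (x i - (c i : ℝ))^2 = f i ^ 2 := fun i => by
    simp only [hf, hudef, sq_abs]
  rcases hdich with hS | hT
  · -- integer candidate
    by_cases hpar : (2:ℤ) ∣ ∑ i, c i
    · refine ⟨_, memD8E8 c hpar, ?_⟩
      calc ∑ i, (x i - (c i : ℝ))^2 = ∑ i, f i ^ 2 := Finset.sum_congr rfl fun i _ => hsqf i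
        _ ≤ 2 * f i₀ := hS
        _ ≤ 1 := by linarith [hfhalf i₀]
    · set s : ℤ := if 0 ≤ u i₀ then 1 else -1 with hs
      set c' : Fin 8 → ℤ := Function.update c i₀ (c i₀ + s) with hc'
      have hpar' : (2:ℤ) ∣ ∑ i, c' i := by
        have := sum_update_gen c c' i₀ fun i hi => Function.update_of_ne hi _ _
        rw [this]
        have : c' i₀ = c i₀ + s := Function.update_self _ _ _
        rw [this]
        rcases Int.even_or_odd (∑ i, c i) with he | ho
        · exfalso; exact hpar he.two_dvd
        · have hso : Odd s := by
            rcases le_or_gt 0 (u i₀) with h | h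
            · simp [hs, h]
            · simp [hs, not_le.mpr h]
            
          rcases hso with ⟨k, hk⟩
          rcases ho with ⟨l, hl⟩
          exact ⟨l + k + 1, by rw [hl, hk]; ring⟩
      refine ⟨_, memD8E8 c' hpar', ?_⟩
      have hkey : (x i₀ - ((c' i₀ : ℤ) : ℝ))^2 = (1 - f i₀)^2 := by
        have hci : c' i₀ = c i₀ + s := Function.update_self _ _ _
        rw [hci]
        rcases le_or_gt 0 (u i₀) with h | h
        · have : s = 1 := by simp [hs, h]
          rw [this]
          have hfi : f i₀ = u i₀ := by rw [hf]; exact abs_of_nonneg h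
          push_cast
          rw [hfi]
          simp only [hudef]
          push_cast
          ring
        · have : s = -1 := by simp [hs, not_le.mpr h]
          rw [this]
          have hfi : f i₀ = -u i₀ := by rw [hf]; exact abs_of_neg h
          push_cast
          rw [hfi]
          simp only [hudef]
          push_cast
          ring
      have hsum : (∑ i, (x i - (c' i : ℝ))^2)
          = (∑ i, (x i - (c i : ℝ))^2) - (x i₀ - (c i₀ : ℝ))^2 + (x i₀ - (c' i₀ : ℝ))^2 :=
        sum_update_gen (fun i => (x i - (c i : ℝ))^2)
          (fun i => (x i - (c' i : ℝ))^2) i₀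
          (fun i hi => by
            show (x i - (c' i : ℝ))^2 = (x i - (c i : ℝ))^2
            rw [show c' i = c i from Function.update_of_ne hi _ _])
      show (∑ i, (x i - (c' i : ℝ))^2) ≤ 1
      rw [hsum, hkey]
      have hSf : (∑ i, (x i - (c i : ℝ))^2) = ∑ i, f i ^ 2 :=
        Finset.sum_congr rfl fun i _ => hsqf i
      rw [hSf, hsqf i₀]
      nlinarith [hfhalf i₀, hf0 i₀]
  · -- half-integer candidate
    set d : Fin 8 → ℤ := fun i => if 0 ≤ u i then c i else c i - 1 with hd
    have hdist : ∀ i, (x i - ((d i : ℝ) + 1/2))^2 = g i ^ 2 := by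
      intro i
      simp only [hd, hg, hf]
      rcases le_or_gt 0 (u i) with h | h
      · rw [if_pos h, abs_of_nonneg h]
        have : x i - ((c i : ℝ) + 1/2) = u i - 1/2 := by simp only [hudef]; ring
        rw [this]; ring
      · rw [if_neg (not_le.mpr h), abs_of_neg h]
        push_cast
        have : x i - ((c i : ℝ) - 1 + 1/2) = u i + 1/2 := by simp only [hudef]; ring
        rw [this]; ring
    by_cases hpar : (2:ℤ) ∣ ∑ i, d i
    · refine ⟨_, memHalfE8 d hpar, ?_⟩
      calc ∑ i, (x i - ((d i : ℝ) + 1/2))^2 = ∑ i, g i ^ 2 :=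
            Finset.sum_congr rfl fun i _ => hdist i
        _ ≤ 2 * g i₁ := hT
        _ ≤ 1 := by have h9 := hghalf i₁; linarith
    · set s : ℤ := if 0 ≤ u i₁ then -1 else 1 with hs
      set d' : Fin 8 → ℤ := Function.update d i₁ (d i₁ + s) with hd'
      have hpar' : (2:ℤ) ∣ ∑ i, d' i := by
        have := sum_update_gen d d' i₁ fun i hi => Function.update_of_ne hi _ _
        rw [this, show d' i₁ = d i₁ + s from Function.update_self _ _ _]
        rcases Int.even_or_odd (∑ i, d i) with he | ho
        · exfalso; exact hpar he.two_dvd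
        · have hso : Odd s := by
            rcases le_or_gt 0 (u i₁) with h | h
            · simp [hs, h]
            · simp [hs, not_le.mpr h]
          rcases hso with ⟨k, hk⟩
          rcases ho with ⟨l, hl⟩
          exact ⟨l + k + 1, by rw [hl, hk]; ring⟩
      refine ⟨_, memHalfE8 d' hpar', ?_⟩
      have hkey : (x i₁ - ((d' i₁ : ℝ) + 1/2))^2 = (1 - g i₁)^2 := by
        rw [show d' i₁ = d i₁ + s from Function.update_self _ _ _]
        simp only [hd, hg, hf]
        rcases le_or_gt 0 (u i₁) with h | h
        · rw [if_pos h]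
          have hsv : s = -1 := by simp [hs, h]
          rw [hsv, abs_of_nonneg h]
          push_cast
          have : x i₁ - ((c i₁ : ℝ) + (-1) + 1/2) = u i₁ + 1/2 := by simp only [hudef]; ring
          rw [this]; ring
        · rw [if_neg (not_le.mpr h)]
          have hsv : s = 1 := by simp [hs, not_le.mpr h]
          rw [hsv, abs_of_neg h]
          push_cast
          have : x i₁ - ((c i₁ : ℝ) - 1 + 1 + 1/2) = u i₁ - 1/2 := by simp only [hudef]; ring
          rw [this]; ring
      have hsum : (∑ i, (x i - ((d' i : ℝ) + 1/2))^2)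
          = (∑ i, (x i - ((d i : ℝ) + 1/2))^2) - (x i₁ - ((d i₁ : ℝ) + 1/2))^2
            + (x i₁ - ((d' i₁ : ℝ) + 1/2))^2 :=
        sum_update_gen (fun i => (x i - ((d i : ℝ) + 1/2))^2)
          (fun i => (x i - ((d' i : ℝ) + 1/2))^2) i₁
          (fun i hi => by
            show (x i - ((d' i : ℝ) + 1/2))^2 = (x i - ((d i : ℝ) + 1/2))^2
            rw [show d' i = d i from Function.update_of_ne hi _ _])
      show (∑ i, (x i - ((d' i : ℝ) + 1/2))^2) ≤ 1
      rw [hsum, hkey, hdist i₁]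
      have hTg : (∑ i, (x i - ((d i : ℝ) + 1/2))^2) = ∑ i, g i ^ 2 :=
        Finset.sum_congr rfl fun i _ => hdist i
      rw [hTg]
      nlinarith [hghalf i₁, hg0 i₁]


lemma latticeMin_le {n : ℕ} (M : Submodule ℤ (EuclideanSpace ℝ (Fin n)))
    {x : EuclideanSpace ℝ (Fin n)} (hx : x ∈ M) (hne : x ≠ 0) :
    latticeMin M ≤ ⟪x, x⟫ :=
  csInf_le ⟨0, fun r hr => by obtain ⟨y, -, -, hy⟩ := hr; rw [← hy]; exact real_inner_self_nonneg⟩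
    ⟨x, hx, hne, rfl⟩

lemma spanE8_top : Submodule.span ℝ (E8lattice : Set (EuclideanSpace ℝ (Fin 8))) = ⊤ := by
  have hsingle : ∀ i : Fin 8,
      (WithLp.toLp 2 (fun j => if j = i then (2:ℝ) else 0) : EuclideanSpace ℝ (Fin 8)) ∈ E8lattice := by
    intro i
    have h := memD8E8 (fun j => if j = i then 2 else 0)
      ⟨1, by rw [Fintype.sum_ite_eq' i (fun _ => (2:ℤ))]; ring⟩
    convert h using 1
    congr 1; funext j
    by_cases hj : j = i <;> simp [hj]
  rw [eq_top_iff]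
  rintro w -
  have hrep : w = ∑ i, (w i / 2) •
      (WithLp.toLp 2 (fun j => if j = i then (2:ℝ) else 0) : EuclideanSpace ℝ (Fin 8)) := by
    ext j
    rw [WithLp.ofLp_sum, Finset.sum_apply]
    simp only [WithLp.ofLp_toLp, Pi.smul_apply, PiLp.smul_apply, smul_eq_mul, mul_ite, mul_zero]
    rw [Fintype.sum_ite_eq j (fun x => w x / 2 * 2)]
    ring
  rw [hrep]
  exact Submodule.sum_mem _ fun i _ =>
    Submodule.smul_mem _ _ (Submodule.subset_span (hsingle i))

set_option maxHeartbeats 2000000 in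
/-- Let `Λ` be a well-rounded lattice in `ℝ⁹` having an `E₈`-section with the
same minimum: there is an `8`-dimensional subspace `H ⊆ ℝ⁹` such that `Λ ∩ H`
is the image of `E₈` under a linear map multiplying all inner products by the
constant `(min Λ)/2` (so `Λ ∩ H` is similar to `E₈` with
`min(Λ ∩ H) = min Λ`).  Then no lattice `L ⊆ ℝ⁹` with `min L = min Λ` strictly
contains `Λ`. -/
theorem no_strict_superlattice_of_E8_section
    (Λ : Submodule ℤ (EuclideanSpace ℝ (Fin 9))) (hΛ : IsLattice Λ)
    (hwr : Submodule.span ℝ (minimalVectors Λ) = ⊤)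
    (H : Submodule ℝ (EuclideanSpace ℝ (Fin 9)))
    (hH : Module.finrank ℝ H = 8)
    (f : EuclideanSpace ℝ (Fin 8) →ₗ[ℝ] EuclideanSpace ℝ (Fin 9))
    (hf : ∀ x y, ⟪f x, f y⟫ = (latticeMin Λ / 2) * ⟪x, y⟫)
    (hsec : f '' (E8lattice : Set (EuclideanSpace ℝ (Fin 8)))
      = (Λ : Set (EuclideanSpace ℝ (Fin 9))) ∩ (H : Set (EuclideanSpace ℝ (Fin 9)))) :
    ¬ ∃ L : Submodule ℤ (EuclideanSpace ℝ (Fin 9)),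
        IsLattice L ∧ latticeMin L = latticeMin Λ ∧ Λ < L := by
  rintro ⟨L, hLlat, hLmin, hlt⟩
  have hsub : Λ ≤ L := hlt.le
  set m : ℝ := latticeMin Λ with hmdef
  -- m > 0
  have hmv : (minimalVectors Λ).Nonempty := by
    by_contra h
    rw [Set.not_nonempty_iff_eq_empty] at h
    rw [h, Submodule.span_empty] at hwr
    exact absurd hwr bot_ne_top
  obtain ⟨x₀, hx₀Λ, hx₀ne, hx₀m⟩ := hmv
  have hm : 0 < m := by
    rw [hmdef, ← hx₀m]
    exact lt_of_le_of_ne real_inner_self_nonneg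
      (Ne.symm fun h => hx₀ne (inner_self_eq_zero.mp h))
  -- lower bound for norms in L
  have hLlb : ∀ x ∈ L, x ≠ 0 → m ≤ ⟪x, x⟫ := by
    intro x hx hne
    have := latticeMin_le L hx hne
    rw [hLmin] at this
    exact this
  -- f is injective
  have hinj : Function.Injective f := by
    intro a b hab
    have h0 : f (a - b) = 0 := by rw [map_sub, hab, sub_self]
    have := hf (a - b) (a - b)
    rw [h0, inner_zero_left] at this
    have h2 : ⟪a - b, a - b⟫ = 0 := by
      rcases mul_eq_zero.mp this.symm with h | h
      · exact absurd h (by positivity)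
      · exact h
    rw [sub_eq_zero.mp (inner_self_eq_zero.mp h2)]
  -- H ≠ ⊤
  have hHne : H ≠ ⊤ := by
    intro h
    rw [h, finrank_top, finrank_euclideanSpace_fin] at hH
    norm_num at hH
  -- range f = H
  have hrange : LinearMap.range f = H := by
    have h1 : LinearMap.range f = Submodule.span ℝ (f '' (E8lattice : Set _)) := by
      rw [← Submodule.map_span, spanE8_top, Submodule.map_top]
    have h2 : LinearMap.range f ≤ H := by
      rw [h1, Submodule.span_le, hsec]
      exact Set.inter_subset_right
    refine Submodule.eq_of_le_of_finrank_le h2 ?_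
    rw [hH, LinearMap.finrank_range_of_inj hinj, finrank_euclideanSpace_fin]
  -- f e facts
  have hfeΛ : ∀ e ∈ E8lattice, f e ∈ Λ := by
    intro e he
    have : f e ∈ f '' (E8lattice : Set _) := ⟨e, he, rfl⟩
    rw [hsec] at this
    exact this.1
  have hfeH : ∀ e : EuclideanSpace ℝ (Fin 8), f e ∈ H := by
    intro e
    rw [← hrange]
    exact LinearMap.mem_range_self f e
  -- inner products in the E8 coordinates
  have hE8inner : ∀ w e : EuclideanSpace ℝ (Fin 8),
      ⟪w - e, w - e⟫ = ∑ i, (w i - e i)^2 := by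
    intro w e
    rw [PiLp.inner_apply]
    refine Finset.sum_congr rfl fun i _ => ?_
    rw [RCLike.inner_apply, conj_trivial]
    have : (w - e) i = w i - e i := rfl
    rw [this]; ring
  -- normal vector
  have hperp_ne : Hᗮ ≠ ⊥ := by
    intro h
    exact hHne (Submodule.orthogonal_eq_bot_iff.mp h)
  obtain ⟨n₀, hn₀mem, hn₀ne⟩ := (Submodule.ne_bot_iff _).mp hperp_ne
  set n : EuclideanSpace ℝ (Fin 9) := (‖n₀‖⁻¹ : ℝ) • n₀ with hndef
  have hnmem : n ∈ Hᗮ := Submodule.smul_mem _ _ hn₀mem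
  have hn₀norm : ‖n₀‖ ≠ 0 := norm_ne_zero_iff.mpr hn₀ne
  have hnn : ⟪n, n⟫ = 1 := by
    rw [hndef, real_inner_smul_left, real_inner_smul_right,
      real_inner_self_eq_norm_mul_norm]
    field_simp
  have hnne : n ≠ 0 := by
    intro h
    rw [h, inner_zero_left] at hnn
    norm_num at hnn
  -- Hᗮ = span {n}
  have hperp_eq : Hᗮ = Submodule.span ℝ {n} := by
    have hle : Submodule.span ℝ {n} ≤ Hᗮ :=
      Submodule.span_le.mpr (Set.singleton_subset_iff.mpr hnmem)
    have hfr : Module.finrank ℝ Hᗮ ≤ 1 := by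
      have := Submodule.finrank_add_finrank_orthogonal (K := H)
      rw [hH, finrank_euclideanSpace_fin] at this
      omega
    exact (Submodule.eq_of_le_of_finrank_le hle
      (by rw [finrank_span_singleton hnne]; exact hfr)).symm
  -- φ vanishes on H
  have hφH : ∀ h ∈ H, ⟪n, h⟫ = 0 := by
    intro h hh
    rw [real_inner_comm]
    exact (Submodule.mem_orthogonal H n).mp hnmem h hh
  -- φ = 0 implies membership in H
  have hmemH : ∀ v : EuclideanSpace ℝ (Fin 9), ⟪n, v⟫ = 0 → v ∈ H := by
    intro v hv
    have : v ∈ Hᗮᗮ := by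
      rw [Submodule.mem_orthogonal]
      intro u hu
      rw [hperp_eq] at hu
      obtain ⟨t, rfl⟩ := Submodule.mem_span_singleton.mp hu
      rw [real_inner_smul_left, hv, mul_zero]
    rwa [Submodule.orthogonal_orthogonal] at this
  -- orthogonal decomposition
  have dec : ∀ (v : EuclideanSpace ℝ (Fin 9)), ∀ h ∈ H,
      ⟪v - h, v - h⟫ = ⟪(H.orthogonalProjection v : EuclideanSpace ℝ (Fin 9)) - h,
        (H.orthogonalProjection v : EuclideanSpace ℝ (Fin 9)) - h⟫ + ⟪n, v⟫^2 := by
    intro v h hh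
    set p : EuclideanSpace ℝ (Fin 9) := (H.orthogonalProjection v : EuclideanSpace ℝ (Fin 9))
      with hpdef
    have hpH : p ∈ H := SetLike.coe_mem _
    have hvp : v - p ∈ Hᗮ := Submodule.sub_starProjection_mem_orthogonal (K := H) v
    obtain ⟨t, ht⟩ := Submodule.mem_span_singleton.mp (hperp_eq ▸ hvp)
    have hφv : ⟪n, v⟫ = t := by
      have h1 : ⟪n, v - p⟫ = t := by
        rw [← ht, real_inner_smul_right, hnn, mul_one]
      rw [inner_sub_right, hφH p hpH, sub_zero] at h1
      exact h1
    have hsplit : v - h = (p - h) + (v - p) := by abel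
    rw [hsplit, real_inner_add_add_self]
    have hmid : ⟪p - h, v - p⟫ = 0 :=
      (Submodule.mem_orthogonal H (v - p)).mp hvp (p - h) (Submodule.sub_mem H hpH hh)
    have hlast : ⟪v - p, v - p⟫ = t^2 := by
      rw [← ht, real_inner_smul_left, real_inner_smul_right, hnn]
      ring
    rw [hmid, hφv, hlast]
    ring
  -- claim 1 : vectors of L in H are in f '' E8
  have claim1 : ∀ v ∈ L, v ∈ H → v ∈ f '' (E8lattice : Set (EuclideanSpace ℝ (Fin 8))) := by
    intro v hvL hvH
    have : v ∈ LinearMap.range f := by rw [hrange]; exact hvH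
    obtain ⟨w, rfl⟩ := this
    obtain ⟨e, heE8, hle⟩ := E8_covering w
    suffices hwe : w = e by exact ⟨e, heE8, by rw [hwe]⟩
    by_contra hwe
    have hfne : f w - f e ≠ 0 := by
      intro h
      exact hwe (hinj (sub_eq_zero.mp h))
    have hmem : f w - f e ∈ L := sub_mem hvL (hsub (hfeΛ e heE8))
    have h1 : m ≤ ⟪f w - f e, f w - f e⟫ := hLlb _ hmem hfne
    have h2 : ⟪f w - f e, f w - f e⟫ = m / 2 * ⟪w - e, w - e⟫ := by
      rw [← map_sub]; exact hf _ _
    have h3 : ⟪w - e, w - e⟫ ≤ 1 := by rw [hE8inner]; exact hle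
    nlinarith [hm]
  -- claim 2 : vectors of L with nonzero φ have φ² ≥ m/2
  have claim2 : ∀ v ∈ L, ⟪n, v⟫ ≠ 0 → m / 2 ≤ ⟪n, v⟫^2 := by
    intro v hvL hφv
    set p : EuclideanSpace ℝ (Fin 9) := (H.orthogonalProjection v : EuclideanSpace ℝ (Fin 9))
      with hpdef
    have hpH : p ∈ H := SetLike.coe_mem _
    have : p ∈ LinearMap.range f := by rw [hrange]; exact hpH
    obtain ⟨w, hw⟩ := this
    obtain ⟨e, heE8, hle⟩ := E8_covering w
    have hvne : v - f e ≠ 0 := by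
      intro h
      have : v = f e := by rwa [sub_eq_zero] at h
      exact hφv (this ▸ hφH (f e) (hfeH e))
    have hmem : v - f e ∈ L := sub_mem hvL (hsub (hfeΛ e heE8))
    have h1 : m ≤ ⟪v - f e, v - f e⟫ := hLlb _ hmem hvne
    have h2 := dec v (f e) (hfeH e)
    have h3 : ⟪p - f e, p - f e⟫ = m / 2 * ⟪w - e, w - e⟫ := by
      rw [← hw, ← map_sub]; exact hf _ _
    have h4 : ⟪w - e, w - e⟫ ≤ 1 := by rw [hE8inner]; exact hle
    rw [h2, h3] at h1
    nlinarith [hm]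
  -- φ² is bounded by the norm
  have hφbound : ∀ v : EuclideanSpace ℝ (Fin 9), ⟪n, v⟫^2 ≤ ⟪v, v⟫ := by
    intro v
    have h2 := dec v 0 (Submodule.zero_mem H)
    rw [sub_zero, sub_zero] at h2
    have : (0:ℝ) ≤ ⟪(H.orthogonalProjection v : EuclideanSpace ℝ (Fin 9)),
        (H.orthogonalProjection v : EuclideanSpace ℝ (Fin 9))⟫ := real_inner_self_nonneg
    linarith
  -- the subgroup of ℝ of φ-values of L
  set A : AddSubgroup ℝ :=
    { carrier := (fun v => ⟪n, v⟫) '' (L : Set (EuclideanSpace ℝ (Fin 9)))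
      zero_mem' := ⟨0, L.zero_mem, inner_zero_right n⟩
      add_mem' := by
        rintro _ _ ⟨a, ha, rfl⟩ ⟨b, hb, rfl⟩
        exact ⟨a + b, L.add_mem ha hb, inner_add_right n a b⟩
      neg_mem' := by
        rintro _ ⟨a, ha, rfl⟩
        exact ⟨-a, L.neg_mem ha, inner_neg_right n a⟩ } with hAdef
  have hAmem : ∀ v ∈ L, ⟪n, v⟫ ∈ A := fun v hv => ⟨v, hv, rfl⟩
  have hAval : ∀ a ∈ A, ∃ v ∈ L, ⟪n, v⟫ = a := by
    rintro a ⟨v, hv, rfl⟩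
    exact ⟨v, hv, rfl⟩
  clear_value A
  -- A is nontrivial
  have hAnontriv : ∃ v ∈ L, ⟪n, v⟫ ≠ 0 := by
    by_contra h
    push_neg at h
    have hLH : (L : Set (EuclideanSpace ℝ (Fin 9))) ⊆ (H : Set (EuclideanSpace ℝ (Fin 9))) :=
      fun v hv => hmemH v (h v hv)
    have := Submodule.span_le.mpr hLH
    rw [hLlat.2] at this
    exact hHne (top_le_iff.mp this)
  -- every nonzero element of A has square at least m/2
  have hAgap : ∀ a ∈ A, a ≠ 0 → m / 2 ≤ a^2 := by
    intro a ha hane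
    obtain ⟨v, hv, rfl⟩ := hAval a ha
    exact claim2 v hv hane
  -- A is cyclic
  rcases AddSubgroup.dense_or_cyclic A with hdense | ⟨α, hα⟩
  · -- dense case is impossible
    set t : ℝ := Real.sqrt (m / 2) with htdef
    clear_value t
    have ht : 0 < t := by rw [htdef]; exact Real.sqrt_pos.mpr (by linarith)
    obtain ⟨a, haball, haA⟩ := (Metric.dense_iff.mp hdense) (t/2) (t/2) (by linarith)
    rw [Metric.mem_ball, Real.dist_eq] at haball
    obtain ⟨hb1, hb2⟩ := abs_lt.mp haball
    have ha1 : 0 < a := by linarith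
    have ha2 : a < t := by linarith
    have hlt2 : a^2 < m/2 := by
      have : a^2 < t^2 := by nlinarith
      rwa [htdef, Real.sq_sqrt (by linarith : (0:ℝ) ≤ m/2)] at this
    have := hAgap a haA (ne_of_gt ha1)
    linarith
  · -- cyclic case
    rw [← AddSubgroup.zmultiples_eq_closure] at hα
    -- α ≠ 0
    obtain ⟨v₁, hv₁L, hv₁⟩ := hAnontriv
    have hαne : α ≠ 0 := by
      intro h
      have := hAmem v₁ hv₁L
      rw [hα, h] at this
      obtain ⟨k, hk⟩ := AddSubgroup.mem_zmultiples_iff.mp this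
      rw [smul_zero] at hk
      exact hv₁ hk.symm
    -- α is a value of L
    have hαA : α ∈ A := by
      rw [hα]
      exact AddSubgroup.mem_zmultiples α
    have hα2 : m / 2 ≤ α^2 := hAgap α hαA hαne
    -- α is not a φ-value of Λ
    have hαnotΛ : ¬ ∃ w ∈ Λ, ⟪n, w⟫ = α := by
      rintro ⟨w₀, hw₀Λ, hw₀⟩
      have hLle : L ≤ Λ := by
        intro v hvL
        have := hAmem v hvL
        rw [hα] at this
        obtain ⟨k, hk⟩ := AddSubgroup.mem_zmultiples_iff.mp this
        have hkw : (k • w₀ : EuclideanSpace ℝ (Fin 9)) ∈ Λ := Λ.smul_mem k hw₀Λ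
        have hφkw : ⟪n, (k • w₀ : EuclideanSpace ℝ (Fin 9))⟫ = ⟪n, v⟫ := by
          rw [← Int.cast_smul_eq_zsmul ℝ k w₀, real_inner_smul_right, hw₀, ← hk]
          rw [zsmul_eq_mul]
        have hmem0 : v - k • w₀ ∈ L := sub_mem hvL (hsub hkw)
        have hφ0 : ⟪n, v - k • w₀⟫ = 0 := by
          rw [inner_sub_right, hφkw, sub_self]
        have hinH : v - k • w₀ ∈ H := hmemH _ hφ0
        have := claim1 _ hmem0 hinH
        rw [hsec] at this
        have hvΛ : v - k • w₀ ∈ Λ := this.1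
        have : (v - k • w₀) + k • w₀ ∈ Λ := Λ.add_mem hvΛ hkw
        rwa [sub_add_cancel] at this
      exact hlt.not_ge hLle
    -- a minimal vector of Λ outside H
    have hmvH : ¬ (minimalVectors Λ ⊆ (H : Set (EuclideanSpace ℝ (Fin 9)))) := by
      intro hsubH
      have := Submodule.span_le.mpr hsubH
      rw [hwr] at this
      exact hHne (top_le_iff.mp this)
    obtain ⟨u, humem, huH⟩ := Set.not_subset.mp hmvH
    obtain ⟨huΛ, hune, hum⟩ := humem
    have hφu : ⟪n, u⟫ ≠ 0 := fun h => huH (hmemH u h)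
    have := hAmem u (hsub huΛ)
    rw [hα] at this
    obtain ⟨j, hj⟩ := AddSubgroup.mem_zmultiples_iff.mp this
    have hj0 : j ≠ 0 := by
      rintro rfl
      rw [zero_smul] at hj
      exact hφu hj.symm
    have hj1 : j ≠ 1 := by
      rintro rfl
      rw [one_smul] at hj
      exact hαnotΛ ⟨u, huΛ, hj.symm⟩
    have hjm1 : j ≠ -1 := by
      rintro rfl
      refine hαnotΛ ⟨-u, Λ.neg_mem huΛ, ?_⟩
      rw [inner_neg_right, ← hj]
      ring_nf
    have hj2 : (4:ℤ) ≤ j^2 := by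
      have : j ≤ -2 ∨ 2 ≤ j := by omega
      rcases this with h | h <;> nlinarith
    have hj2R : (4:ℝ) ≤ ((j:ℝ))^2 := by exact_mod_cast hj2
    have hju : ⟪n, u⟫ = (j:ℝ) * α := by rw [← hj, zsmul_eq_mul]
    have hub : ⟪n, u⟫^2 ≤ m := by
      have := hφbound u
      rw [hum] at this
      exact this
    rw [hju] at hub
    nlinarith [hα2, hm, sq_nonneg ((j:ℝ))]
end
end

section
/- There is no lattice Λ in ℝ⁹ with a Minkowskian sublattice Λ' such that the quotient Λ/Λ' is 3-elementary of order 27, i.e. Λ/Λ' ≅ (ℤ/3ℤ)³. -/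
open scoped BigOperators RealInnerProductSpace

noncomputable section

abbrev W3 := ZMod 3 × ZMod 3 × ZMod 3
def dot3 (v w : W3) : ZMod 3 := v.1*w.1 + v.2.1*w.2.1 + v.2.2*w.2.2
def lift3 (x : ZMod 3) : ℤ := if x = 0 then 0 else if x = 1 then 1 else -1
def Ssum3 (a b : W3) : ℤ := ∑ v : W3, lift3 (dot3 v a) * lift3 (dot3 v b)
lemma lift3_cast : ∀ x : ZMod 3, ((lift3 x : ℤ) : ZMod 3) = x := by decide
lemma lift3_abs : ∀ x : ZMod 3, |lift3 x| = if x = 0 then 0 else 1 := by decide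
lemma SLpair3 : ∀ a b : W3, ∃ v : W3, v ≠ 0 ∧ dot3 v a = 0 ∧ dot3 v b = 0 := by decide
lemma Ssum3_val : ∀ a b : W3, Ssum3 a b =
    if a = 0 ∨ b = 0 then 0 else if b = a then 18 else if b = -a then -18 else 0 := by decide
lemma dot3_neg (v a : W3) : dot3 v (-a) = - dot3 v a := by simp [dot3, mul_neg]; ring
lemma W3_torsion : ∀ w : W3, w + w + w = 0 := by decide
lemma W3_decomp : ∀ v : W3, v = v.1.val • ((1,0,0) : W3) + v.2.1.val • ((0,1,0) : W3)
    + v.2.2.val • ((0,0,1) : W3) := by decide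
lemma zmod3_val_cast : ∀ x : ZMod 3, ((x.val : ℕ) : ZMod 3) = x := by decide
lemma find_r : ∀ i j k : Fin 9, ∃ r : Fin 9, r ≠ i ∧ r ≠ j ∧ r ≠ k := by decide
lemma W3_nonzero_card : (Finset.univ.filter (fun v : W3 => ¬ v = 0)).card = 26 := by decide
lemma pm_trans {M : Type*} [SubtractionMonoid M] {a b c : M}
    (h1 : b = a ∨ b = -a) (h2 : c = b ∨ c = -b) : c = a ∨ c = -a := by
  rcases h1 with rfl | rfl <;> rcases h2 with rfl | rfl <;> simp [neg_neg]

set_option maxHeartbeats 2000000 in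
/-- There is no lattice `Λ` in `ℝ⁹` with a Minkowskian sublattice `Λ'` such
that the quotient `Λ/Λ'` is 3-elementary of order 27, i.e.
`Λ/Λ' ≅ (ℤ/3ℤ)³`. -/
theorem no_three_elementary_27_quotient_dim_nine :
    ¬ ∃ Λ Λ' : Submodule ℤ (EuclideanSpace ℝ (Fin 9)),
      IsLattice Λ ∧ IsMinkowskian Λ Λ' ∧
        Nonempty (quotLat Λ Λ' ≃+ (ZMod 3 × ZMod 3 × ZMod 3)) := by
  rintro ⟨Λ, Λ', -, ⟨e, he_li, he_min, hΛ'⟩, ⟨φ⟩⟩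
  set m := latticeMin Λ with hm_def
  -- basic facts
  have heΛ : ∀ i, e i ∈ Λ := fun i => (he_min i).1
  have he0 : ∀ i, e i ≠ 0 := fun i => (he_min i).2.1
  have heN : ∀ i, ⟪e i, e i⟫ = m := fun i => (he_min i).2.2
  have hm_le : ∀ x, x ∈ Λ → x ≠ 0 → m ≤ ⟪x, x⟫ := by
    intro x hx hx0
    refine csInf_le ⟨0, ?_⟩ ⟨x, hx, hx0, rfl⟩
    rintro r ⟨z, -, -, rfl⟩; exact real_inner_self_nonneg
  have hm_pos : 0 < m := by
    rw [← heN 0]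
    exact lt_of_le_of_ne real_inner_self_nonneg
      (Ne.symm ((inner_self_ne_zero (𝕜 := ℝ)).2 (he0 0)))
  have hΛ'le : Λ' ≤ Λ := by
    rw [hΛ']; exact Submodule.span_le.2 (Set.range_subset_iff.2 heΛ)
  -- the map y from integer coefficient vectors to E
  set y : (Fin 9 → ℤ) → EuclideanSpace ℝ (Fin 9) := fun a => ∑ i, (a i : ℝ) • e i with hy_def
  have hy_zsmul : ∀ (a : Fin 9 → ℤ) i, ((a i : ℝ)) • e i = a i • e i := by
    intro a i; rw [Int.cast_smul_eq_zsmul]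
  have hy_mem : ∀ a, y a ∈ Λ' := by
    intro a
    refine Submodule.sum_mem _ fun i _ => ?_
    rw [hy_zsmul]
    exact Submodule.smul_mem _ _ (by rw [hΛ']; exact Submodule.subset_span ⟨i, rfl⟩)
  have hy_add : ∀ a b, y (a + b) = y a + y b := by
    intro a b
    simp only [hy_def, Pi.add_apply, Int.cast_add, add_smul, Finset.sum_add_distrib]
  have hy_mul3 : ∀ d, y (fun i => 3 * d i) = (3:ℝ) • y d := by
    intro d
    simp only [hy_def, Int.cast_mul, mul_smul, Finset.smul_sum]
    norm_num
  have hy_inj : ∀ a b, y a = y b → a = b := by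
    intro a b hab
    have h0 : ∑ i, ((a i - b i : ℤ) : ℝ) • e i = 0 := by
      push_cast
      simp only [sub_smul, Finset.sum_sub_distrib]
      rw [show ∑ i, (a i : ℝ) • e i = y a from rfl, show ∑ i, (b i : ℝ) • e i = y b from rfl,
        hab, sub_self]
    have hz := Fintype.linearIndependent_iff.1 he_li (fun i => ((a i - b i : ℤ) : ℝ)) h0
    funext i
    have hi : ((a i - b i : ℤ) : ℝ) = 0 := hz i
    have : (a i - b i : ℤ) = 0 := by exact_mod_cast hi
    omega
  have hy_repr : ∀ x, x ∈ Λ' → ∃ c : Fin 9 → ℤ, y c = x := by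
    intro x hx
    rw [hΛ'] at hx
    obtain ⟨cc, hcc⟩ := (Submodule.mem_span_range_iff_exists_fun ℤ).1 hx
    exact ⟨cc, by rw [hy_def]; simp only [hy_zsmul]; exact hcc⟩
  -- quotient: 3x ∈ Λ' for x ∈ Λ
  have hx3 : ∀ x : EuclideanSpace ℝ (Fin 9), (hx : x ∈ Λ) → (3:ℤ) • x ∈ Λ' := by
    intro x hx
    set q : quotLat Λ Λ' := Submodule.Quotient.mk ⟨x, hx⟩ with hq
    have h3q : (3:ℤ) • q = 0 := by
      apply φ.injective
      rw [map_zsmul, map_zero]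
      have h3 : (3:ℤ) • φ q = φ q + φ q + φ q := by
        have : (3:ℤ) = 1 + 1 + 1 := by norm_num
        rw [this, add_zsmul, add_zsmul, one_zsmul]
      rw [h3]; exact W3_torsion _
    have : Submodule.Quotient.mk ((3:ℤ) • (⟨x, hx⟩ : Λ)) = (0 : quotLat Λ Λ') := by
      rw [Submodule.Quotient.mk_smul]; exact h3q
    rw [Submodule.Quotient.mk_eq_zero] at this
    exact this
  -- representatives and coefficients
  have hsurj : Function.Surjective
      (Submodule.Quotient.mk (p := Submodule.comap Λ.subtype Λ')) :=
    Submodule.Quotient.mk_surjective _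
  choose rep hrep using fun w : W3 => hsurj (φ.symm w)
  have hcex : ∀ w : W3, ∃ c : Fin 9 → ℤ, y c = (3:ℤ) • ((rep w : EuclideanSpace ℝ (Fin 9))) :=
    fun w => hy_repr _ (hx3 _ (rep w).2)
  choose c hc using hcex
  set L : W3 → Fin 9 → ZMod 3 := fun w i => ((c w i : ℤ) : ZMod 3) with hL_def
  -- additivity of L
  have hLadd : ∀ v w i, L (v + w) i = L v i + L w i := by
    intro v w i
    have hz : ((rep (v+w) : Λ) - rep v - rep w : Λ) ∈ Submodule.comap Λ.subtype Λ' := by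
      rw [← Submodule.Quotient.mk_eq_zero]
      have : Submodule.Quotient.mk (p := Submodule.comap Λ.subtype Λ')
          ((rep (v+w) : Λ) - rep v - rep w) =
          Submodule.Quotient.mk (rep (v+w)) - Submodule.Quotient.mk (rep v)
            - Submodule.Quotient.mk (rep w) := by
        rfl
      rw [this, hrep, hrep, hrep, map_add φ.symm, sub_sub, sub_self]
    obtain ⟨d, hd⟩ := hy_repr _ hz
    -- y (c (v+w)) = y (c v) + y (c w) + 3 • y d
    have key : y (c (v+w)) = y (c v + c w + fun i => 3 * d i) := by
      rw [hy_add, hy_add, hy_mul3, hc, hc, hc, hd]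
      have h3 : ∀ z : EuclideanSpace ℝ (Fin 9), (3:ℝ) • z = (3:ℤ) • z := by
        intro z; rw [← Int.cast_smul_eq_zsmul (R := ℝ)]; norm_num
      rw [h3]
      simp only [map_sub, Submodule.subtype_apply]
      rw [smul_sub, smul_sub]
      abel
    have := hy_inj _ _ key
    have hco : c (v+w) i = c v i + c w i + 3 * d i := by rw [this]; rfl
    rw [hL_def]
    simp only [hco]
    have h30 : (3 : ZMod 3) = 0 := by decide
    push_cast [h30]
    ring
  have hL0 : ∀ i, L 0 i = 0 := by
    intro i
    have := hLadd 0 0 i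
    simpa using this.symm
  -- the key lower bound
  have hKL : ∀ v : W3, v ≠ 0 → ∀ a : Fin 9 → ℤ, (∀ i, ((a i : ℤ) : ZMod 3) = L v i) →
      9 * m ≤ ⟪y a, y a⟫ := by
    intro v hv a ha
    have hdvd : ∀ i, ∃ d : ℤ, a i - c v i = 3 * d := by
      intro i
      have : ((a i - c v i : ℤ) : ZMod 3) = 0 := by
        push_cast
        rw [ha i, hL_def]
        ring
      exact (ZMod.intCast_zmod_eq_zero_iff_dvd _ 3).1 this
    choose d hd using hdvd
    have ha' : a = c v + fun i => 3 * d i := by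
      funext i; have := hd i; simp only [Pi.add_apply]; omega
    have h3 : ∀ z : EuclideanSpace ℝ (Fin 9), (3:ℤ) • z = (3:ℝ) • z := by
      intro z; rw [← Int.cast_smul_eq_zsmul (R := ℝ)]; norm_num
    have hya : y a = (3:ℝ) • ((rep v : EuclideanSpace ℝ (Fin 9)) + y d) := by
      rw [ha', hy_add, hy_mul3, hc, h3, smul_add]
    set x' : EuclideanSpace ℝ (Fin 9) := (rep v : EuclideanSpace ℝ (Fin 9)) + y d with hx'
    have hx'Λ : x' ∈ Λ := Submodule.add_mem _ (rep v).2 (hΛ'le (hy_mem d))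
    have hx'0 : x' ≠ 0 := by
      intro h0
      apply hv
      have hmem : (rep v : EuclideanSpace ℝ (Fin 9)) ∈ Λ' := by
        have : (rep v : EuclideanSpace ℝ (Fin 9)) = -(y d) := by
          rw [eq_neg_iff_add_eq_zero]; exact h0
        rw [this]; exact Submodule.neg_mem _ (hy_mem d)
      have : Submodule.Quotient.mk (p := Submodule.comap Λ.subtype Λ') (rep v) = 0 :=
        (Submodule.Quotient.mk_eq_zero _).2 hmem
      rw [hrep] at this
      have := congrArg φ this
      rw [AddEquiv.apply_symm_apply, map_zero] at this
      exact this
    have : ⟪y a, y a⟫ = 9 * ⟪x', x'⟫ := by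
      rw [hya, real_inner_smul_left, real_inner_smul_right]; ring
    rw [this]
    have := hm_le x' hx'Λ hx'0
    nlinarith [hm_pos]
  -- columns and the bridge to dot3
  have hLn : ∀ (n : ℕ) (v : W3) (i : Fin 9), L (n • v) i = n • L v i := by
    intro n
    induction n with
    | zero => intro v i; simpa using hL0 i
    | succ k ih =>
      intro v i
      rw [succ_nsmul, hLadd, ih, succ_nsmul]
  set col : Fin 9 → W3 := fun i => (L (1,0,0) i, L (0,1,0) i, L (0,0,1) i) with hcol_def
  have hbridge : ∀ v i, L v i = dot3 v (col i) := by
    intro v i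
    conv_lhs => rw [W3_decomp v]
    rw [hLadd, hLadd, hLn, hLn, hLn]
    simp only [dot3, hcol_def, nsmul_eq_mul, zmod3_val_cast]
  -- the delta vectors
  have hyδ : ∀ i : Fin 9, y (fun j => if j = i then (1:ℤ) else 0) = e i := by
    intro i
    simp only [hy_def]
    rw [Finset.sum_eq_single i]
    · simp
    · intro b _ hb; simp [hb]
    · intro h; exact absurd (Finset.mem_univ i) h
  -- weight of codewords: at most 3 zero coordinates
  have hzeros : ∀ v : W3, v ≠ 0 → ((Finset.univ.filter (fun i => L v i = 0)).card ≤ 3) := by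
    intro v hv
    set A : Fin 9 → ℤ := fun i => lift3 (L v i) with hA_def
    have hAcast : ∀ i, ((A i : ℤ) : ZMod 3) = L v i := fun i => lift3_cast _
    set u := y A with hu
    set Q : ℝ := ⟪u, u⟫ with hQuv
    have hQ9 : 9 * m ≤ Q := hKL v hv A hAcast
    have hQpos : 0 < Q := lt_of_lt_of_le (by nlinarith) hQ9
    have hIb : ∀ i, |⟪u, e i⟫| ≤ Q / 6 := by
      intro i
      have hcast3 : ∀ (s : ℤ) (j : Fin 9),
          ((A j + s * (if j = i then (1:ℤ) else 0) : ℤ) : ZMod 3) = L v j → True := fun _ _ _ => trivial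
      have hpm : ∀ s : ℤ, ((s : ZMod 3) = 0) →
          9 * m ≤ Q + 2 * (s:ℝ) * ⟪u, e i⟫ + (s:ℝ)^2 * m := by
        intro s hs
        have hacast : ∀ j, (((fun j => A j + s * (if j = i then (1:ℤ) else 0)) j : ℤ) : ZMod 3)
            = L v j := by
          intro j
          push_cast [hs]
          simp [hAcast j]
        have hkl := hKL v hv _ hacast
        have hysum : y (fun j => A j + s * (if j = i then (1:ℤ) else 0))
            = u + (s:ℝ) • e i := by
          have h1 : (fun j => A j + s * (if j = i then (1:ℤ) else 0))
              = A + fun j => s * (if j = i then (1:ℤ) else 0) := rfl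
          rw [h1, hy_add, hu]
          congr 1
          have h2 : ∀ d : Fin 9 → ℤ, y (fun j => s * d j) = (s:ℝ) • y d := by
            intro d
            simp only [hy_def, Int.cast_mul, mul_smul, Finset.smul_sum]
          rw [h2, hyδ]
        rw [hysum] at hkl
        rw [real_inner_add_add_self] at hkl
        simp only [real_inner_smul_left, real_inner_smul_right] at hkl
        rw [heN] at hkl
        rw [hQuv]
        linear_combination hkl
      have hp := hpm 3 (by decide)
      have hn := hpm (-3) (by decide)
      push_cast at hp hn
      rw [abs_le]
      constructor <;> linarith [hp, hn]
    -- Q = ∑ A i ⟪e i, u⟫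
    have hQsum : Q = ∑ i, (A i : ℝ) * ⟪e i, u⟫ := by
      rw [hQuv]
      conv_lhs => rw [hu, hy_def]
      rw [sum_inner]
      refine Finset.sum_congr rfl fun i _ => ?_
      rw [real_inner_smul_left]
    have hstep : Q ≤ ∑ i, (if L v i = 0 then (0:ℝ) else 1) * (Q/6) := by
      conv_lhs => rw [hQsum]
      refine Finset.sum_le_sum fun i _ => ?_
      have h2 : |(A i:ℝ)| = if L v i = 0 then (0:ℝ) else 1 := by
        rw [hA_def, ← Int.cast_abs, lift3_abs]
        split_ifs <;> norm_num
      have h3 : |⟪e i, u⟫| ≤ Q/6 := by rw [real_inner_comm]; exact hIb i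
      calc (A i:ℝ) * ⟪e i, u⟫ ≤ |(A i:ℝ) * ⟪e i, u⟫| := le_abs_self _
        _ = |(A i:ℝ)| * |⟪e i, u⟫| := abs_mul _ _
        _ ≤ (if L v i = 0 then (0:ℝ) else 1) * (Q/6) := by
            rw [h2]
            refine mul_le_mul le_rfl h3 (abs_nonneg _) ?_
            split_ifs <;> norm_num
    have hsum2 : ∑ i, (if L v i = 0 then (0:ℝ) else 1) * (Q/6)
        = ((Finset.univ.filter (fun i => ¬ L v i = 0)).card : ℝ) * (Q/6) := by
      rw [← Finset.sum_mul]
      congr 1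
      rw [← Finset.sum_boole]
      refine Finset.sum_congr rfl fun i _ => ?_
      by_cases h : L v i = 0 <;> simp [h]
    by_contra hcon
    push_neg at hcon
    have hpart : (Finset.univ.filter (fun i => L v i = 0)).card
        + (Finset.univ.filter (fun i => ¬ L v i = 0)).card = 9 := by
      rw [Finset.card_filter_add_card_filter_not]
      simp
    have hs5 : (Finset.univ.filter (fun i => ¬ L v i = 0)).card ≤ 5 := by omega
    have hs5' : ((Finset.univ.filter (fun i => ¬ L v i = 0)).card : ℝ) ≤ 5 := by
      exact_mod_cast hs5
    rw [hsum2] at hstep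
    nlinarith [hstep, hQpos, hs5']
  -- transfer of zeros along dependence
  have htr : ∀ p q : Fin 9, (col q = col p ∨ col q = -col p) →
      ∀ v : W3, dot3 v (col p) = 0 → dot3 v (col q) = 0 := by
    rintro p q (hpq | hpq) v hvp <;> rw [hpq]
    · exact hvp
    · rw [dot3_neg, hvp, neg_zero]
  -- four distinct zero coordinates are impossible
  have four : ∀ a b cc dd : Fin 9, a ≠ b → a ≠ cc → a ≠ dd → b ≠ cc → b ≠ dd → cc ≠ dd →
      ∀ v : W3, v ≠ 0 → dot3 v (col a) = 0 → dot3 v (col b) = 0 → dot3 v (col cc) = 0 →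
      dot3 v (col dd) = 0 → False := by
    intro a b cc dd hab hac had hbc hbd hcd v hv ha hb hcc' hdd
    have hsub : ({a, b, cc, dd} : Finset (Fin 9)) ⊆ Finset.univ.filter (fun i => L v i = 0) := by
      intro r hr
      simp only [Finset.mem_insert, Finset.mem_singleton] at hr
      simp only [Finset.mem_filter, Finset.mem_univ, true_and]
      rcases hr with rfl | rfl | rfl | rfl <;> rw [hbridge] <;> assumption
    have hcard : ({a, b, cc, dd} : Finset (Fin 9)).card = 4 := by
      rw [Finset.card_insert_of_notMem (by simp [hab, hac, had]),
        Finset.card_insert_of_notMem (by simp [hbc, hbd]),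
        Finset.card_insert_of_notMem (by simp [hcd]), Finset.card_singleton]
    have h43 := le_trans (hcard ▸ Finset.card_le_card hsub) (hzeros v hv)
    omega
  have pm_symm : ∀ a b : W3, (b = a ∨ b = -a) → (a = b ∨ a = -b) := by
    rintro a b (rfl | rfl) <;> simp
  -- no two distinct dependent pairs
  have hNoTwo : ∀ i j k l : Fin 9, i ≠ j → k ≠ l →
      (col j = col i ∨ col j = -col i) → (col l = col k ∨ col l = -col k) →
      ¬(k = i ∧ l = j) → ¬(k = j ∧ l = i) → False := by
    intro i j k l hij hkl hdj hdl hne1 hne2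
    by_cases hki : k = i
    · rw [hki] at hdl hkl
      have hlj : l ≠ j := fun h => hne1 ⟨hki, h⟩
      have hli : l ≠ i := fun h => hkl h.symm
      obtain ⟨r, hri, hrj, hrl⟩ := find_r i j l
      obtain ⟨v, hv0, hvi, hvr⟩ := SLpair3 (col i) (col r)
      exact four i j l r hij (Ne.symm hli) (Ne.symm hri) (Ne.symm hlj) (Ne.symm hrj)
        (Ne.symm hrl) v hv0 hvi (htr i j hdj v hvi) (htr i l hdl v hvi) hvr
    · by_cases hkj : k = j
      · rw [hkj] at hdl hkl
        have hli : l ≠ i := fun h => hne2 ⟨hkj, h⟩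
        have hlj : l ≠ j := fun h => hkl h.symm
        have hdl' : col l = col i ∨ col l = -col i := pm_trans hdj hdl
        obtain ⟨r, hri, hrj, hrl⟩ := find_r i j l
        obtain ⟨v, hv0, hvi, hvr⟩ := SLpair3 (col i) (col r)
        exact four i j l r hij (Ne.symm hli) (Ne.symm hri) (Ne.symm hlj) (Ne.symm hrj)
          (Ne.symm hrl) v hv0 hvi (htr i j hdj v hvi) (htr i l hdl' v hvi) hvr
      · by_cases hli : l = i
        · rw [hli] at hdl
          have hdk : col k = col i ∨ col k = -col i := pm_symm _ _ hdl
          obtain ⟨r, hri, hrj, hrk⟩ := find_r i j k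
          obtain ⟨v, hv0, hvi, hvr⟩ := SLpair3 (col i) (col r)
          exact four i j k r hij (Ne.symm hki) (Ne.symm hri) (Ne.symm hkj) (Ne.symm hrj)
            (Ne.symm hrk) v hv0 hvi (htr i j hdj v hvi) (htr i k hdk v hvi) hvr
        · by_cases hlj : l = j
          · rw [hlj] at hdl
            have hdk : col k = col j ∨ col k = -col j := pm_symm _ _ hdl
            have hdk' : col k = col i ∨ col k = -col i := pm_trans hdj hdk
            obtain ⟨r, hri, hrj, hrk⟩ := find_r i j k
            obtain ⟨v, hv0, hvi, hvr⟩ := SLpair3 (col i) (col r)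
            exact four i j k r hij (Ne.symm hki) (Ne.symm hri) (Ne.symm hkj) (Ne.symm hrj)
              (Ne.symm hrk) v hv0 hvi (htr i j hdj v hvi) (htr i k hdk' v hvi) hvr
          · obtain ⟨v, hv0, hvi, hvk⟩ := SLpair3 (col i) (col k)
            exact four i j k l hij (Ne.symm hki) (fun h => hli h.symm) (Ne.symm hkj)
              (fun h => hlj h.symm) hkl v hv0 hvi (htr i j hdj v hvi) hvk (htr k l hdl v hvk)
  -- the set of dependent pairs has at most 2 elements
  set F : Finset (Fin 9 × Fin 9) := Finset.univ.filter
      (fun p => p.1 ≠ p.2 ∧ (col p.2 = col p.1 ∨ col p.2 = -col p.1)) with hF_def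
  have hFcard : F.card ≤ 2 := by
    rcases Finset.eq_empty_or_nonempty F with hF0 | ⟨⟨i,j⟩, hij⟩
    · rw [hF0]; norm_num
    · have hij' := Finset.mem_filter.1 hij
      have hsub : F ⊆ {(i,j), (j,i)} := by
        rintro ⟨k,l⟩ hkl
        have hkl' := Finset.mem_filter.1 hkl
        simp only [Finset.mem_insert, Finset.mem_singleton, Prod.mk.injEq]
        by_contra hcon
        push_neg at hcon
        exact hNoTwo i j k l hij'.2.1 hkl'.2.1 hij'.2.2 hkl'.2.2
          (fun h => (hcon.1 h.1 h.2).elim) (fun h => (hcon.2 h.1 h.2).elim)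
      calc F.card ≤ ({(i,j), (j,i)} : Finset (Fin 9 × Fin 9)).card := Finset.card_le_card hsub
        _ ≤ 2 := by
          refine le_trans (Finset.card_insert_le _ _) ?_
          simp
  -- Gram matrix off-diagonal bound
  have hGo : ∀ i j : Fin 9, i ≠ j → |⟪e i, e j⟫| ≤ m / 2 := by
    intro i j hij
    set δ : Fin 9 → ℤ := fun k => if k = i then 1 else 0 with hδ
    set ε : Fin 9 → ℤ := fun k => if k = j then 1 else 0 with hε
    have hsum : e i + e j = y (δ + ε) := by rw [hy_add, hyδ, hyδ]
    have hdiff : e i - e j = y (δ - ε) := by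
      have : y (δ - ε) + y ε = y δ := by
        rw [← hy_add]; congr 1; funext k; simp
      rw [hyδ, hyδ] at this
      rw [← this]; abel
    have hne1 : e i + e j ≠ 0 := by
      intro h0
      have : y (δ + ε) = y 0 := by
        rw [← hsum, h0]
        simp [hy_def]
      have := congrFun (hy_inj _ _ this) i
      rw [hδ, hε] at this; simp [hij] at this
    have hne2 : e i - e j ≠ 0 := by
      intro h0
      have : y (δ - ε) = y 0 := by
        rw [← hdiff, h0]
        simp [hy_def]
      have := congrFun (hy_inj _ _ this) i
      rw [hδ, hε] at this; simp [hij] at this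
    have h1 := hm_le _ (Submodule.add_mem _ (heΛ i) (heΛ j)) hne1
    have h2 := hm_le _ (Submodule.sub_mem _ (heΛ i) (heΛ j)) hne2
    rw [real_inner_add_add_self, heN, heN] at h1
    rw [real_inner_sub_sub_self, heN, heN] at h2
    rw [abs_le]
    constructor <;> linarith
  -- expansion of inner products of y's
  have hy_inner : ∀ a b : Fin 9 → ℤ, ⟪y a, y b⟫ = ∑ i, ∑ j, (a i : ℝ) * (b j : ℝ) * ⟪e i, e j⟫ := by
    intro a b
    simp only [hy_def]
    rw [sum_inner]
    refine Finset.sum_congr rfl fun i _ => ?_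
    rw [inner_sum]
    refine Finset.sum_congr rfl fun j _ => ?_
    rw [real_inner_smul_left, real_inner_smul_right]
    ring
  set A : W3 → Fin 9 → ℤ := fun v i => lift3 (L v i) with hA_def
  set T : Fin 9 → Fin 9 → ℤ := fun i j => Ssum3 (col i) (col j) with hT_def
  -- the grand sum identity
  have hsum_eq : ∑ v : W3, ⟪y (A v), y (A v)⟫ = ∑ i, ∑ j, ⟪e i, e j⟫ * (T i j : ℝ) := by
    rw [Finset.sum_congr rfl (fun v _ => hy_inner (A v) (A v))]
    rw [Finset.sum_comm]
    refine Finset.sum_congr rfl fun i _ => ?_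
    rw [Finset.sum_comm]
    refine Finset.sum_congr rfl fun j _ => ?_
    have hTv : ((T i j : ℤ) : ℝ) = ∑ v : W3, (A v i : ℝ) * (A v j : ℝ) := by
      rw [hT_def]
      show ((Ssum3 (col i) (col j) : ℤ) : ℝ) = _
      rw [Ssum3]
      push_cast
      refine Finset.sum_congr rfl fun v _ => ?_
      rw [hA_def]
      show (lift3 (dot3 v (col i)) : ℝ) * (lift3 (dot3 v (col j)) : ℝ)
          = (lift3 (L v i) : ℝ) * (lift3 (L v j) : ℝ)
      rw [hbridge, hbridge]
    rw [hTv, Finset.mul_sum]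
    refine Finset.sum_congr rfl fun v _ => ?_
    ring
  -- lower bound for the grand sum
  have hlower : 26 * (9 * m) ≤ ∑ v : W3, ⟪y (A v), y (A v)⟫ := by
    have hterm : ∀ v : W3, (if v = 0 then (0:ℝ) else 9 * m) ≤ ⟪y (A v), y (A v)⟫ := by
      intro v
      by_cases hv : v = 0
      · rw [if_pos hv]; exact real_inner_self_nonneg
      · rw [if_neg hv]; exact hKL v hv (A v) (fun i => lift3_cast _)
    calc (26:ℝ) * (9 * m) = ∑ v : W3, (if v = 0 then (0:ℝ) else 9 * m) := by
          have h1 : ∀ v : W3, (if v = 0 then (0:ℝ) else 9*m) = (if ¬ v = 0 then 9*m else 0) := by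
            intro v; by_cases h : v = 0 <;> simp [h]
          rw [Finset.sum_congr rfl (fun v _ => h1 v), ← Finset.sum_filter,
            Finset.sum_const, W3_nonzero_card, nsmul_eq_mul]
          norm_num
      _ ≤ _ := Finset.sum_le_sum (fun v _ => hterm v)
  -- upper bound, term by term
  have hbound : ∀ i j : Fin 9, ⟪e i, e j⟫ * (T i j : ℝ) ≤
      (if i = j then 18*m else 0) +
      (if i ≠ j ∧ (col j = col i ∨ col j = -col i) then 9*m else 0) := by
    intro i j
    by_cases hij : i = j
    · subst hij
      rw [if_pos rfl, if_neg (by simp)]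
      have hT18 : (T i i : ℝ) = if col i = 0 then 0 else 18 := by
        rw [hT_def]
        show ((Ssum3 (col i) (col i) : ℤ) : ℝ) = _
        rw [Ssum3_val]
        by_cases h0 : col i = 0 <;> simp [h0]
      rw [hT18, heN]
      by_cases h0 : col i = 0 <;> simp [h0] <;> nlinarith [hm_pos]
    · rw [if_neg hij]
      by_cases hdep : col j = col i ∨ col j = -col i
      · rw [if_pos ⟨hij, hdep⟩]
        have h18 : |(T i j : ℝ)| ≤ 18 := by
          rw [hT_def]
          show |((Ssum3 (col i) (col j) : ℤ) : ℝ)| ≤ 18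
          rw [Ssum3_val]
          split_ifs <;> norm_num
        calc ⟪e i, e j⟫ * (T i j : ℝ) ≤ |⟪e i, e j⟫ * (T i j : ℝ)| := le_abs_self _
          _ = |⟪e i, e j⟫| * |(T i j : ℝ)| := abs_mul _ _
          _ ≤ (m/2) * 18 := by
              refine mul_le_mul (hGo i j hij) h18 (abs_nonneg _) ?_
              linarith [hm_pos]
          _ = 0 + 9 * m := by ring
      · rw [if_neg (fun h => hdep h.2)]
        have hT0 : T i j = 0 := by
          rw [hT_def]
          show Ssum3 (col i) (col j) = 0
          rw [Ssum3_val]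
          push_neg at hdep
          split_ifs with h1 h2 h3
          · rfl
          · exact absurd h2 hdep.1
          · exact absurd h3 hdep.2
          · rfl
        rw [hT0]
        norm_num
  -- summing the upper bound
  have hupper : ∑ i, ∑ j, ⟪e i, e j⟫ * (T i j : ℝ) ≤ 162 * m + (F.card : ℝ) * (9 * m) := by
    calc ∑ i, ∑ j, ⟪e i, e j⟫ * (T i j : ℝ)
        ≤ ∑ i, ∑ j, ((if i = j then 18*m else 0) +
          (if i ≠ j ∧ (col j = col i ∨ col j = -col i) then 9*m else 0)) :=
          Finset.sum_le_sum fun i _ => Finset.sum_le_sum fun j _ => hbound i j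
      _ = (∑ i, ∑ j, (if i = j then 18*m else (0:ℝ)))
          + ∑ i, ∑ j, (if i ≠ j ∧ (col j = col i ∨ col j = -col i) then 9*m else (0:ℝ)) := by
          rw [← Finset.sum_add_distrib]
          refine Finset.sum_congr rfl fun i _ => ?_
          rw [← Finset.sum_add_distrib]
      _ = 162 * m + (F.card : ℝ) * (9 * m) := by
          congr 1
          · have : ∀ i : Fin 9, ∑ j, (if i = j then 18*m else (0:ℝ)) = 18 * m := by
              intro i
              rw [Finset.sum_ite_eq]
              simp
            rw [Finset.sum_congr rfl (fun i _ => this i), Finset.sum_const]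
            simp
            ring
          · rw [← Finset.sum_product']
            rw [Finset.univ_product_univ]
            have : ∀ p : Fin 9 × Fin 9,
                (if p.1 ≠ p.2 ∧ (col p.2 = col p.1 ∨ col p.2 = -col p.1) then 9*m else (0:ℝ))
                = (if (fun q : Fin 9 × Fin 9 => q.1 ≠ q.2 ∧ (col q.2 = col q.1 ∨ col q.2 = -col q.1)) p then 9*m else (0:ℝ)) := fun p => rfl
            rw [Finset.sum_congr rfl (fun p _ => this p), ← Finset.sum_filter, ← hF_def,
              Finset.sum_const, nsmul_eq_mul]
  -- conclusion
  have h2 : (F.card : ℝ) ≤ 2 := by exact_mod_cast hFcard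
  rw [hsum_eq] at hlower
  nlinarith [hlower, hupper, hm_pos, h2]
end
end
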